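/- arXiv:1507.02465 — 7 statements merged into one kernel-verified Lean document; each statement's English description precedes it below -/
import Mathlib

section
/- Let k = l + m with l, m ≥ 1, and let σ₁ ∈ S_l, σ₂ ∈ S_m. Then σ₁ ⊕ σ₂ ≤ γ_k in the geodesic order on S_k if and only if σ₁ ≤ γ_l and σ₂ ≤ γ_m. (This is the case σ = (1,…,k) of the paper's Lemma on geodesic factorization, to which the general lemma is reduced.) -/
/-- the setoid of "same cycle of σ". -/
def sameCycleSetoid {k : ℕ} (σ : Equiv.Perm (Fin k)) : Setoid (Fin k) :=
  ⟨σ.SameCycle, ⟨fun _ => Equiv.Perm.SameCycle.refl σ _, fun h => h.symm, fun h h' => h.trans h'⟩⟩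

/-- number of orbits of a permutation (fixed points included). -/
noncomputable def cyc {k : ℕ} (σ : Equiv.Perm (Fin k)) : ℕ :=
  Nat.card (Quotient (sameCycleSetoid σ))

/-- reflection length `ℓ(σ) = k − c(σ)`. -/
noncomputable def plen {k : ℕ} (σ : Equiv.Perm (Fin k)) : ℤ := (k : ℤ) - cyc σ

/-- the geodesic (absolute) order on permutations: `τ ≤ σ` iff `ℓ(τ) + ℓ(τ⁻¹σ) = ℓ(σ)`. -/
def permLe {k : ℕ} (τ σ : Equiv.Perm (Fin k)) : Prop := plen τ + plen (τ⁻¹ * σ) = plen σ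

/-- `σ₁ ⊕ σ₂`, acting as `σ₁` on `{1,…,l}` and as the shifted copy of `σ₂` on `{l+1,…,l+m}`. -/
def sumPerm {l m : ℕ} (σ₁ : Equiv.Perm (Fin l)) (σ₂ : Equiv.Perm (Fin m)) :
    Equiv.Perm (Fin (l + m)) :=
  finSumFinEquiv.permCongr (Equiv.sumCongr σ₁ σ₂)

/-!
Write `c` for the number of cycles, so that `σ ≤ γ` means `c σ + c (σ⁻¹ γ) = n + c γ`.
Since `γ_{l+m} = (1, l+1) · (γ_l ⊕ γ_m)`, the permutation `(σ₁ ⊕ σ₂)⁻¹ γ_{l+m}` is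
`σ₁⁻¹ γ_l ⊕ σ₂⁻¹ γ_m` times a transposition joining its two blocks, which merges two cycles.
Hence the defect `l + m + 1 - c (σ₁ ⊕ σ₂) - c ((σ₁ ⊕ σ₂)⁻¹ γ_{l+m})` is the sum of the defects
for `σ₁` and `σ₂`, both nonnegative by the triangle inequality `c σ + c τ ≤ n + c (σ τ)`.
Both facts rest on the observation that multiplying by a transposition `(a b)` changes the
orbit partition only by gluing or splitting the classes of `a` and `b`.
-/

namespace Setoid
variable {α : Type*}

open Classical in
/-- The classes of `a` and `b` merged: the class of `b` is sent to that of `a`. -/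
noncomputable def glue (r : Setoid α) (a b : α) : Setoid α :=
  ker fun x => if r x b then Quotient.mk r a else Quotient.mk r x

variable {r t : Setoid α} {a b : α}

theorem le_glue : r ≤ r.glue a b := by
  intro x y hxy
  rw [glue, ker_def, Quotient.sound hxy]
  by_cases hx : r x b
  · rw [if_pos hx, if_pos (r.trans (r.symm hxy) hx)]
  · rw [if_neg hx, if_neg fun hy => hx (r.trans hxy hy)]

theorem glue_rel : r.glue a b a b := by
  rw [glue, ker_def]; simp

theorem glue_le (hrt : r ≤ t) (hab : t a b) : r.glue a b ≤ t := by
  intro x y hxy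
  rw [glue, ker_def] at hxy
  split_ifs at hxy with hx hy hy
  · exact t.trans (hrt hx) (t.symm (hrt hy))
  · exact t.trans (hrt hx) (t.trans (t.symm hab) (hrt (Quotient.exact hxy)))
  · exact t.trans (hrt (Quotient.exact hxy)) (t.trans hab (t.symm (hrt hy)))
  · exact hrt (Quotient.exact hxy)

theorem glue_eq_self (hab : r a b) : r.glue a b = r :=
  le_antisymm (glue_le le_rfl hab) le_glue

theorem glue_rel_swap_apply [DecidableEq α] (x : α) : r.glue a b x (Equiv.swap a b x) := by
  rcases eq_or_ne x a with rfl | hxa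
  · simpa using glue_rel
  rcases eq_or_ne x b with rfl | hxb
  · simpa using (r.glue a x).symm glue_rel
  · rw [Equiv.swap_apply_of_ne_of_ne hxa hxb]

theorem card_quotient_glue [Finite α] (hab : ¬ r a b) :
    Nat.card (Quotient r) = Nat.card (Quotient (r.glue a b)) + 1 := by
  classical
  have hrange : Set.range (fun x => if r x b then Quotient.mk r a else Quotient.mk r x) =
      {Quotient.mk r b}ᶜ := by
    ext q
    induction q using Quotient.inductionOn with | h y => ?_
    simp only [Set.mem_range, Set.mem_compl_singleton_iff, ne_eq, Quotient.eq]
    constructor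
    · rintro ⟨x, hx⟩ hyb
      split_ifs at hx with hxb
      · exact hab (r.trans (Quotient.exact hx) hyb)
      · exact hxb (r.trans (Quotient.exact hx) hyb)
    · intro hyb
      exact ⟨y, if_neg hyb⟩
  rw [glue, Nat.card_congr (quotientKerEquivRange _), hrange, Nat.card_coe_set_eq,
    ← Set.ncard_compl_add_ncard {Quotient.mk r b}, Set.ncard_singleton]

theorem card_quotient_le_glue [Finite α] :
    Nat.card (Quotient r) ≤ Nat.card (Quotient (r.glue a b)) + 1 := by
  by_cases hab : r a b
  · rw [glue_eq_self hab]; omega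
  · rw [card_quotient_glue hab]

theorem card_quotient_le_of_le [Finite α] (h : r ≤ t) :
    Nat.card (Quotient t) ≤ Nat.card (Quotient r) :=
  Nat.card_le_card_of_surjective (map_of_le h) fun q => q.inductionOn fun x => ⟨⟦x⟧, rfl⟩

end Setoid

namespace Equiv.Perm
variable {α β : Type*}

noncomputable def numCycles (σ : Perm α) : ℕ := Nat.card (Quotient (SameCycle.setoid σ))

theorem SameCycle.setoid_le {σ : Perm α} {r : Setoid α} (h : ∀ x, r x (σ x)) :
    SameCycle.setoid σ ≤ r := by
  suffices hpow : ∀ x (i : ℤ), r x ((σ ^ i) x) by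
    rintro x _ ⟨i, rfl⟩
    exact hpow x i
  intro x i
  induction i using Int.induction_on with
  | zero => exact r.refl x
  | succ i ih => exact r.trans ih (by rw [add_comm, zpow_one_add, mul_apply]; exact h _)
  | pred i ih =>
    have hstep : σ ((σ ^ (-(i : ℤ) - 1)) x) = (σ ^ (-(i : ℤ))) x := by
      rw [← mul_apply, ← zpow_one_add, add_sub_cancel]
    exact r.trans ih (r.symm (hstep ▸ h _))

theorem numCycles_eq_card_of_surjective {σ : Perm α} (f : α → β) (hf : f.Surjective)
    (h : ∀ x y, σ.SameCycle x y ↔ f x = f y) : numCycles σ = Nat.card β := by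
  have : SameCycle.setoid σ = Setoid.ker f := Setoid.ext h
  rw [numCycles, this, Nat.card_congr (Setoid.quotientKerEquivOfSurjective f hf)]

theorem numCycles_one : numCycles (1 : Perm α) = Nat.card α :=
  numCycles_eq_card_of_surjective id Function.surjective_id fun _ _ => sameCycle_one

theorem sameCycle_permCongr (e : α ≃ β) (σ : Perm α) {x y : β} :
    (e.permCongr σ).SameCycle x y ↔ σ.SameCycle (e.symm x) (e.symm y) := by
  have hpow (i : ℤ) : e.permCongr σ ^ i = e.permCongr (σ ^ i) := (map_zpow e.permCongrHom σ i).symm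
  simp only [SameCycle, hpow, permCongr_apply, ← e.eq_symm_apply]

theorem numCycles_permCongr (e : α ≃ β) (σ : Perm α) : numCycles (e.permCongr σ) = numCycles σ :=
  numCycles_eq_card_of_surjective (fun x => Quotient.mk (SameCycle.setoid σ) (e.symm x))
    (Quotient.mk_surjective.comp e.symm.surjective) fun _ _ =>
      (sameCycle_permCongr e σ).trans (Quotient.eq (r := SameCycle.setoid σ)).symm

theorem sumCongr_zpow (σ : Perm α) (τ : Perm β) (i : ℤ) :
    sumCongr σ τ ^ i = sumCongr (σ ^ i) (τ ^ i) :=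
  (map_zpow (sumCongrHom α β) (σ, τ) i).symm

theorem numCycles_sumCongr [Finite α] [Finite β] (σ : Perm α) (τ : Perm β) :
    numCycles (sumCongr σ τ) = numCycles σ + numCycles τ := by
  rw [numCycles_eq_card_of_surjective
    (Sum.map (Quotient.mk (SameCycle.setoid σ)) (Quotient.mk (SameCycle.setoid τ)))
    (Sum.map_surjective.2 ⟨Quotient.mk_surjective, Quotient.mk_surjective⟩), Nat.card_sum]
  · rfl
  rintro (x | x) (y | y) <;> simp [SameCycle, sumCongr_zpow, Quotient.eq] <;> rfl

section swap
variable [DecidableEq α] (ρ : Perm α) (a b : α)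

theorem sameCycle_setoid_le_glue_swap_mul :
    SameCycle.setoid ρ ≤ (SameCycle.setoid (swap a b * ρ)).glue a b := by
  refine SameCycle.setoid_le fun x => Setoid.trans' _ (Setoid.le_glue ?_)
    (Setoid.symm' _ (Setoid.glue_rel_swap_apply (ρ x)))
  exact sameCycle_apply_right.2 (SameCycle.refl _ x)

theorem glue_sameCycle_setoid_swap_mul :
    (SameCycle.setoid (swap a b * ρ)).glue a b = (SameCycle.setoid ρ).glue a b := by
  refine le_antisymm (Setoid.glue_le ?_ Setoid.glue_rel)
    (Setoid.glue_le (sameCycle_setoid_le_glue_swap_mul ρ a b) Setoid.glue_rel)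
  simpa only [swap_mul_self_mul] using sameCycle_setoid_le_glue_swap_mul (swap a b * ρ) a b

theorem numCycles_le_numCycles_swap_mul_add_one [Finite α] :
    numCycles ρ ≤ numCycles (swap a b * ρ) + 1 :=
  calc numCycles ρ ≤ Nat.card (Quotient ((SameCycle.setoid ρ).glue a b)) + 1 :=
        Setoid.card_quotient_le_glue
    _ ≤ numCycles (swap a b * ρ) + 1 := by
        rw [← glue_sameCycle_setoid_swap_mul]
        exact Nat.add_le_add_right (Setoid.card_quotient_le_of_le Setoid.le_glue) 1

variable {ρ a b}

/-- Along the `ρ`-cycle of `b`, `swap a b * ρ` agrees with `ρ` until the cycle returns to `b`,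
where it goes to `a` instead. -/
theorem sameCycle_swap_mul_of_not_sameCycle [Finite α] (h : ¬ ρ.SameCycle a b) :
    (swap a b * ρ).SameCycle b a := by
  have hret : ∃ n, (ρ ^ (n + 1)) b = b :=
    ⟨orderOf ρ - 1, by rw [Nat.sub_add_cancel (orderOf_pos ρ), pow_orderOf_eq_one, one_apply]⟩
  have hagree : ∀ j ≤ Nat.find hret, ((swap a b * ρ) ^ j) b = (ρ ^ j) b := by
    intro j hj
    induction j with
    | zero => rfl
    | succ j ih =>
      have hna : (ρ ^ (j + 1)) b ≠ a := fun hja =>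
        h (hja ▸ (sameCycle_pow_left (n := j + 1)).2 (SameCycle.refl ρ b))
      have hnb : (ρ ^ (j + 1)) b ≠ b := Nat.find_min hret (by omega)
      rw [pow_succ', mul_apply, ih (by omega), mul_apply, ← mul_apply ρ, ← pow_succ',
        swap_apply_of_ne_of_ne hna hnb]
  refine ⟨(Nat.find hret + 1 : ℕ), ?_⟩
  rw [zpow_natCast, pow_succ', mul_apply, hagree _ le_rfl, mul_apply, ← mul_apply ρ, ← pow_succ',
    Nat.find_spec hret, swap_apply_right]

theorem numCycles_eq_numCycles_swap_mul_add_one [Finite α] (h : ¬ ρ.SameCycle a b) :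
    numCycles ρ = numCycles (swap a b * ρ) + 1 := by
  rw [numCycles, Setoid.card_quotient_glue h, ← glue_sameCycle_setoid_swap_mul,
    Setoid.glue_eq_self (sameCycle_swap_mul_of_not_sameCycle h).symm, numCycles]

theorem numCycles_swap_mul_self_apply [Finite α] {x : α} (hx : ρ x ≠ x) :
    numCycles (swap x (ρ x) * ρ) = numCycles ρ + 1 := by
  have hfix : (swap x (ρ x) * ρ) x = x := by rw [mul_apply, swap_apply_right]
  have hsplit : ¬ (swap x (ρ x) * ρ).SameCycle x (ρ x) := fun hs => hx (hs.eq_of_left hfix).symm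
  rw [numCycles_eq_numCycles_swap_mul_add_one hsplit, swap_mul_self_mul]

end swap

/-- Peeling a transposition off `σ` adds a cycle to `σ` and changes the cycles of `σ * τ` by at
most one. -/
theorem numCycles_add_numCycles_le [Fintype α] [DecidableEq α] (σ τ : Perm α) :
    numCycles σ + numCycles τ ≤ Nat.card α + numCycles (σ * τ) := by
  induction hn : σ.support.card using Nat.strong_induction_on generalizing σ with
  | _ n ih =>
  rcases eq_or_ne σ 1 with rfl | hσ
  · rw [numCycles_one, one_mul]
  obtain ⟨x, hx⟩ : ∃ x, σ x ≠ x := by simpa [Equiv.ext_iff] using hσ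
  have hsplit := numCycles_swap_mul_self_apply hx
  have hσ' := ih _ (hn ▸ card_support_swap_mul hx) (swap x (σ x) * σ) rfl
  have hmerge := numCycles_le_numCycles_swap_mul_add_one (swap x (σ x) * σ * τ) x (σ x)
  rw [← mul_assoc, ← mul_assoc, swap_mul_self, one_mul] at hmerge
  omega

end Equiv.Perm

open Equiv Equiv.Perm

theorem numCycles_finRotate (n : ℕ) [NeZero n] : numCycles (finRotate n) = 1 := by
  have hzero (x : Fin n) : (finRotate n).SameCycle 0 x := ⟨(x : ℕ), by
    rw [zpow_natCast, ← iterate_eq_pow, ← finCycle_eq_finRotate_iterate, finCycle_apply, zero_add]⟩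
  rw [numCycles_eq_card_of_surjective (fun _ => ()) (fun _ => ⟨0, rfl⟩)
    fun x y => iff_of_true ((hzero x).symm.trans (hzero y)) rfl, Nat.card_unique]

theorem val_finRotate {n : ℕ} (i : Fin n) : (finRotate n i : ℕ) = (i + 1) % n := by
  have := i.neZero
  rw [finRotate_apply, Fin.val_add, Fin.val_one', Nat.add_mod_mod]

@[simp] theorem sumPerm_apply_castAdd {l m : ℕ} (σ₁ : Perm (Fin l)) (σ₂ : Perm (Fin m))
    (i : Fin l) :
    sumPerm σ₁ σ₂ (Fin.castAdd m i) = Fin.castAdd m (σ₁ i) := by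
  simp [sumPerm]

@[simp] theorem sumPerm_apply_natAdd {l m : ℕ} (σ₁ : Perm (Fin l)) (σ₂ : Perm (Fin m))
    (j : Fin m) :
    sumPerm σ₁ σ₂ (Fin.natAdd l j) = Fin.natAdd l (σ₂ j) := by
  simp [sumPerm]

theorem finRotate_add (l m : ℕ) [NeZero l] [NeZero m] :
    finRotate (l + m) =
      swap (Fin.castAdd m 0) (Fin.natAdd l 0) * sumPerm (finRotate l) (finRotate m) := by
  ext x
  rw [mul_apply, swap_apply_def]
  have hl := NeZero.pos l
  have hm := NeZero.pos m
  induction x using Fin.addCases with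
  | left i =>
    have h1 : (i : ℕ) + 1 = l ∨ (i : ℕ) + 1 < l := by omega
    simp only [sumPerm_apply_castAdd, Fin.ext_iff, apply_ite Fin.val, Fin.val_castAdd,
      Fin.val_natAdd, val_finRotate, Fin.val_zero]
    rcases h1 with h1 | h1
    · simp [h1, Nat.mod_eq_of_lt (show l < l + m by omega)]
    · rw [Nat.mod_eq_of_lt h1, Nat.mod_eq_of_lt (by omega), if_neg (by omega), if_neg (by omega)]
  | right j =>
    have h1 : (j : ℕ) + 1 = m ∨ (j : ℕ) + 1 < m := by omega
    simp only [sumPerm_apply_natAdd, Fin.ext_iff, apply_ite Fin.val, Fin.val_castAdd,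
      Fin.val_natAdd, val_finRotate, Fin.val_zero]
    rcases h1 with h1 | h1
    · simp [h1, add_assoc]; omega
    · rw [Nat.mod_eq_of_lt h1, Nat.mod_eq_of_lt (by omega), if_neg (by omega), if_neg (by omega)]
      omega

theorem cyc_eq_numCycles {k : ℕ} (σ : Perm (Fin k)) : cyc σ = numCycles σ := rfl

theorem numCycles_sumPerm {l m : ℕ} (σ₁ : Perm (Fin l)) (σ₂ : Perm (Fin m)) :
    numCycles (sumPerm σ₁ σ₂) = numCycles σ₁ + numCycles σ₂ := by
  rw [sumPerm, numCycles_permCongr, numCycles_sumCongr]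

theorem sumPerm_mul {l m : ℕ} (σ₁ τ₁ : Perm (Fin l)) (σ₂ τ₂ : Perm (Fin m)) :
    sumPerm σ₁ σ₂ * sumPerm τ₁ τ₂ = sumPerm (σ₁ * τ₁) (σ₂ * τ₂) := by
  rw [sumPerm, sumPerm, sumPerm, ← permCongr_mul, sumCongr_mul]

theorem sumPerm_inv {l m : ℕ} (σ₁ : Perm (Fin l)) (σ₂ : Perm (Fin m)) :
    (sumPerm σ₁ σ₂)⁻¹ = sumPerm σ₁⁻¹ σ₂⁻¹ :=
  (map_inv (finSumFinEquiv.permCongrHom.toMonoidHom.comp (sumCongrHom _ _)) (σ₁, σ₂)).symm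

theorem not_sameCycle_sumPerm {l m : ℕ} (σ₁ : Perm (Fin l)) (σ₂ : Perm (Fin m))
    (i : Fin l) (j : Fin m) : ¬ (sumPerm σ₁ σ₂).SameCycle (Fin.castAdd m i) (Fin.natAdd l j) := by
  rw [sumPerm, sameCycle_permCongr]
  simp [SameCycle, sumCongr_zpow]

theorem inv_sumPerm_mul_finRotate {l m : ℕ} [NeZero l] [NeZero m] (σ₁ : Perm (Fin l))
    (σ₂ : Perm (Fin m)) : (sumPerm σ₁ σ₂)⁻¹ * finRotate (l + m) =
      swap (Fin.castAdd m (σ₁⁻¹ 0)) (Fin.natAdd l (σ₂⁻¹ 0)) *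
        sumPerm (σ₁⁻¹ * finRotate l) (σ₂⁻¹ * finRotate m) := by
  rw [finRotate_add, ← sumPerm_mul, ← sumPerm_inv, ← sumPerm_apply_castAdd σ₁⁻¹ σ₂⁻¹,
    ← sumPerm_apply_natAdd σ₁⁻¹ σ₂⁻¹, sumPerm_inv, swap_apply_apply]
  group

/-- For `k = l + m` with `l, m ≥ 1` and `σ₁ ∈ S_l`, `σ₂ ∈ S_m`, one has
`σ₁ ⊕ σ₂ ≤ γ_k` in the geodesic order on `S_k` iff `σ₁ ≤ γ_l` and `σ₂ ≤ γ_m`,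
where `γ_n = finRotate n` is the cycle `(1,…,n)`. -/
theorem sumPerm_le_rotate_iff {l m : ℕ} (hl : 1 ≤ l) (hm : 1 ≤ m)
    (σ₁ : Equiv.Perm (Fin l)) (σ₂ : Equiv.Perm (Fin m)) :
    permLe (sumPerm σ₁ σ₂) (finRotate (l + m)) ↔
      permLe σ₁ (finRotate l) ∧ permLe σ₂ (finRotate m) := by
  have : NeZero l := ⟨by omega⟩
  have : NeZero m := ⟨by omega⟩
  have hmerge : numCycles (σ₁⁻¹ * finRotate l) + numCycles (σ₂⁻¹ * finRotate m) =
      numCycles ((sumPerm σ₁ σ₂)⁻¹ * finRotate (l + m)) + 1 := by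
    rw [← numCycles_sumPerm, inv_sumPerm_mul_finRotate]
    exact numCycles_eq_numCycles_swap_mul_add_one (not_sameCycle_sumPerm _ _ _ _)
  have htri₁ := numCycles_add_numCycles_le σ₁ (σ₁⁻¹ * finRotate l)
  have htri₂ := numCycles_add_numCycles_le σ₂ (σ₂⁻¹ * finRotate m)
  rw [mul_inv_cancel_left, numCycles_finRotate, Nat.card_fin] at htri₁ htri₂
  simp only [permLe, plen, cyc_eq_numCycles, numCycles_sumPerm, numCycles_finRotate]
  omega
end

section
/- Let k = l + m with l, m ≥ 1, and let σ₁ ∈ S_l, σ₂ ∈ S_m. Then c((σ₁ ⊕ σ₂)·γ_k⁻¹) = c(σ₁·γ_l⁻¹) + c(σ₂·γ_m⁻¹) − 1, where c denotes the number of orbits (fixed points included). (This is the key identity nc(σ₁⊗σ₂ ∨ (1,…,k)) = nc(σ₁ ∨ (1,…,l)) + nc(σ₂ ∨ (1,…,k−l)) − 1 established in the proof of the geodesic factorization lemma.) -/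
open Equiv Equiv.Perm

/-- general version of the same-cycle setoid. -/
def scs {α : Type*} (σ : Equiv.Perm α) : Setoid α :=
  ⟨σ.SameCycle, ⟨fun _ => Equiv.Perm.SameCycle.refl σ _, fun h => h.symm, fun h h' => h.trans h'⟩⟩

lemma sc_pow {α : Type*} (σ : Equiv.Perm α) (x : α) (n : ℕ) : σ.SameCycle x ((σ ^ n) x) :=
  ⟨(n : ℤ), by rw [zpow_natCast]⟩

section Merge

variable {α : Type*} [Finite α] [DecidableEq α] (π : Equiv.Perm α) (a b : α)

/-- multiplying (on the right) by a transposition joining two distinct cycles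
merges those two cycles. -/
theorem card_quot_mul_swap (hab : ¬ π.SameCycle a b) :
    Nat.card (Quotient (scs (π * Equiv.swap a b))) + 1 = Nat.card (Quotient (scs π)) := by
  classical
  have hne : a ≠ b := fun h => hab (h ▸ Equiv.Perm.SameCycle.refl π a)
  set τ : Equiv.Perm α := π * Equiv.swap a b with hτ
  have hτa : τ a = π b := by simp [hτ, Equiv.Perm.mul_apply]
  have hτb : τ b = π a := by simp [hτ, Equiv.Perm.mul_apply]
  have hτx : ∀ x, x ≠ a → x ≠ b → τ x = π x := by
    intro x h1 h2
    simp [hτ, Equiv.Perm.mul_apply, Equiv.swap_apply_of_ne_of_ne h1 h2]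
  -- a and b are in the same τ-cycle
  have hP : ∃ n, 0 < n ∧ (π ^ n) b = b := by
    refine ⟨orderOf π, orderOf_pos π, ?_⟩
    rw [pow_orderOf_eq_one]; rfl
  have τab : τ.SameCycle a b := by
    set q := Nat.find hP with hqdef
    have hq := Nat.find_spec hP
    have claim : ∀ j, 0 < j → j ≤ q → (τ ^ j) a = (π ^ j) b := by
      intro j
      induction j with
      | zero => intro h; omega
      | succ j ih =>
        intro _ hjq
        rcases Nat.eq_zero_or_pos j with rfl | hj
        · simpa [pow_one] using hτa
        · have hlt : j < q := by omega
          have hnb : (π ^ j) b ≠ b := by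
            intro h
            exact Nat.find_min hP hlt ⟨hj, h⟩
          have hna : (π ^ j) b ≠ a := by
            intro h
            exact hab (Equiv.Perm.SameCycle.symm ⟨(j : ℤ), by rw [zpow_natCast]; exact h⟩)
          have : (τ ^ (j + 1)) a = τ ((π ^ j) b) := by
            rw [pow_succ', Equiv.Perm.mul_apply, ih hj (le_of_lt hlt)]
          rw [this, hτx _ hna hnb, ← Equiv.Perm.mul_apply, ← pow_succ']
    exact ⟨(q : ℤ), by rw [zpow_natCast, claim q hq.1 le_rfl, hq.2]⟩
  -- single-step moves stay in the same τ-cycle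
  have step1 : ∀ x, τ.SameCycle x (π x) := by
    intro x
    by_cases hxa : x = a
    · rw [hxa]
      exact τab.trans ⟨1, by simpa using hτb⟩
    by_cases hxb : x = b
    · rw [hxb]
      exact τab.symm.trans ⟨1, by simpa using hτa⟩
    · exact ⟨1, by simpa using hτx x hxa hxb⟩
  have step2 : ∀ x y, π.SameCycle x y → τ.SameCycle x y := by
    intro x y h
    obtain ⟨n, -, rfl⟩ := h.exists_pow_eq'
    clear h
    induction n with
    | zero => simpa using Equiv.Perm.SameCycle.refl τ x
    | succ n ih =>
      have : (π ^ (n + 1)) x = π ((π ^ n) x) := by rw [pow_succ', Equiv.Perm.mul_apply]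
      rw [this]
      exact ih.trans (step1 _)
  -- characterization of τ-cycles
  set R : α → α → Prop := fun x y =>
    π.SameCycle x y ∨ (π.SameCycle x a ∧ π.SameCycle b y) ∨ (π.SameCycle x b ∧ π.SameCycle a y)
    with hR
  have Rtrans : ∀ x y z, R x y → R y z → R x z := by
    intro x y z hxy hyz
    rcases hxy with h1 | ⟨h1, h2⟩ | ⟨h1, h2⟩ <;>
      rcases hyz with h3 | ⟨h3, h4⟩ | ⟨h3, h4⟩
    · exact Or.inl (h1.trans h3)
    · exact Or.inr (Or.inl ⟨h1.trans h3, h4⟩)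
    · exact Or.inr (Or.inr ⟨h1.trans h3, h4⟩)
    · exact Or.inr (Or.inl ⟨h1, h2.trans h3⟩)
    · exact absurd (h2.trans h3).symm hab
    · exact Or.inl (h1.trans h4)
    · exact Or.inr (Or.inr ⟨h1, h2.trans h3⟩)
    · exact Or.inl (h1.trans h4)
    · exact absurd (h2.trans h3) hab
  have Rstep : ∀ x, R x (τ x) := by
    intro x
    by_cases hxa : x = a
    · rw [hxa, hτa]
      exact Or.inr (Or.inl ⟨Equiv.Perm.SameCycle.refl π a, ⟨1, by simp⟩⟩)
    by_cases hxb : x = b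
    · rw [hxb, hτb]
      exact Or.inr (Or.inr ⟨Equiv.Perm.SameCycle.refl π b, ⟨1, by simp⟩⟩)
    · rw [hτx x hxa hxb]
      exact Or.inl ⟨1, by simp⟩
  have step3 : ∀ x y, τ.SameCycle x y → R x y := by
    intro x y h
    obtain ⟨n, -, rfl⟩ := h.exists_pow_eq'
    clear h
    induction n with
    | zero => exact Or.inl (by simpa using Equiv.Perm.SameCycle.refl π x)
    | succ n ih =>
      have : (τ ^ (n + 1)) x = τ ((τ ^ n) x) := by rw [pow_succ', Equiv.Perm.mul_apply]
      rw [this]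
      exact Rtrans _ _ _ ih (Rstep _)
  -- the bijection
  let g : Quotient (scs π) → Quotient (scs τ) :=
    Quotient.lift (fun x => Quotient.mk (scs τ) x) (fun x y h => Quotient.sound (step2 x y h))
  let bb : Quotient (scs π) := Quotient.mk (scs π) b
  let G : {q : Quotient (scs π) // q ≠ bb} → Quotient (scs τ) := fun q => g q.1
  have hGinj : Function.Injective G := by
    rintro ⟨x', hx⟩ ⟨y', hy⟩ h
    obtain ⟨x, rfl⟩ := Quotient.exists_rep x'
    obtain ⟨y, rfl⟩ := Quotient.exists_rep y'
    have hxy : τ.SameCycle x y := Quotient.exact h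
    rcases step3 x y hxy with h1 | ⟨h1, h2⟩ | ⟨h1, h2⟩
    · exact Subtype.ext (Quotient.sound h1)
    · exact absurd (Quotient.sound h2.symm : _ = bb) hy
    · exact absurd (Quotient.sound h1 : _ = bb) hx
  have hGsurj : Function.Surjective G := by
    intro q
    obtain ⟨c, rfl⟩ := Quotient.exists_rep q
    by_cases hc : π.SameCycle b c
    · refine ⟨⟨Quotient.mk (scs π) a, fun h => hab (Quotient.exact h)⟩, ?_⟩
      exact Quotient.sound (τab.trans (step2 _ _ hc))
    · exact ⟨⟨Quotient.mk (scs π) c, fun h => hc (Quotient.exact h).symm⟩, rfl⟩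
  let E : {q : Quotient (scs π) // q ≠ bb} ≃ Quotient (scs τ) :=
    Equiv.ofBijective G ⟨hGinj, hGsurj⟩
  have h1 : Nat.card (Quotient (scs τ)) = Nat.card {q : Quotient (scs π) // q ≠ bb} :=
    (Nat.card_eq_of_bijective _ E.symm.bijective)
  have h2 : Nat.card (Quotient (scs π)) =
      Nat.card {q : Quotient (scs π) // q = bb} + Nat.card {q : Quotient (scs π) // ¬ q = bb} := by
    rw [← Nat.card_sum]
    exact Nat.card_eq_of_bijective _ (Equiv.sumCompl (fun q => q = bb)).bijective |>.symm
  have h3 : Nat.card {q : Quotient (scs π) // q = bb} = 1 := by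
    have : Unique {q : Quotient (scs π) // q = bb} :=
      ⟨⟨⟨bb, rfl⟩⟩, by rintro ⟨_, rfl⟩; rfl⟩
    exact Nat.card_unique
  have h4 : Nat.card {q : Quotient (scs π) // ¬ q = bb} =
      Nat.card {q : Quotient (scs π) // q ≠ bb} := rfl
  rw [h1, h2, h3, h4]
  omega

end Merge

section SumCongr

variable {α β : Type*} [Finite α] [Finite β] (A : Equiv.Perm α) (B : Equiv.Perm β)

lemma sumCongr_zpow (i : ℤ) : (Equiv.sumCongr A B) ^ i = Equiv.sumCongr (A ^ i) (B ^ i) := by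
  have := map_zpow (Equiv.Perm.sumCongrHom α β) (A, B) i
  exact (by simpa [Equiv.Perm.sumCongrHom, Prod.pow_def] using this : _ = Equiv.sumCongr A B ^ i).symm

lemma sc_inl_inl {x y : α} :
    Equiv.Perm.SameCycle (Equiv.sumCongr A B) (Sum.inl x) (Sum.inl y) ↔ A.SameCycle x y := by
  constructor
  · rintro ⟨i, hi⟩
    rw [sumCongr_zpow] at hi
    simp only [Equiv.sumCongr_apply, Sum.map_inl] at hi
    exact ⟨i, by injection hi⟩
  · rintro ⟨i, hi⟩
    exact ⟨i, by rw [sumCongr_zpow]; simp [hi]⟩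

lemma sc_inr_inr {x y : β} :
    Equiv.Perm.SameCycle (Equiv.sumCongr A B) (Sum.inr x) (Sum.inr y) ↔ B.SameCycle x y := by
  constructor
  · rintro ⟨i, hi⟩
    rw [sumCongr_zpow] at hi
    simp only [Equiv.sumCongr_apply, Sum.map_inr] at hi
    exact ⟨i, by injection hi⟩
  · rintro ⟨i, hi⟩
    exact ⟨i, by rw [sumCongr_zpow]; simp [hi]⟩

lemma sc_inl_inr {x : α} {y : β} :
    ¬ Equiv.Perm.SameCycle (Equiv.sumCongr A B) (Sum.inl x) (Sum.inr y) := by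
  rintro ⟨i, hi⟩
  rw [sumCongr_zpow] at hi
  simp only [Equiv.sumCongr_apply, Sum.map_inl] at hi
  exact Sum.inl_ne_inr hi

lemma card_quot_sumCongr :
    Nat.card (Quotient (scs (Equiv.sumCongr A B))) =
      Nat.card (Quotient (scs A)) + Nat.card (Quotient (scs B)) := by
  rw [← Nat.card_sum]
  refine Nat.card_eq_of_bijective
    (Quotient.lift (Sum.elim (fun x => Sum.inl (Quotient.mk (scs A) x))
      (fun y => Sum.inr (Quotient.mk (scs B) y))) ?_) ⟨?_, ?_⟩
  · rintro (x | x) (y | y) h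
    · exact congrArg Sum.inl (Quotient.sound ((sc_inl_inl A B).mp h))
    · exact absurd h (sc_inl_inr A B)
    · exact absurd h.symm (sc_inl_inr A B)
    · exact congrArg Sum.inr (Quotient.sound ((sc_inr_inr A B).mp h))
  · intro p q h
    obtain ⟨x, rfl⟩ := Quotient.exists_rep p
    obtain ⟨y, rfl⟩ := Quotient.exists_rep q
    rcases x with x | x <;> rcases y with y | y <;> simp only [Quotient.lift_mk, Sum.elim_inl,
      Sum.elim_inr, Sum.inl.injEq, Sum.inr.injEq, reduceCtorEq] at h
    · exact Quotient.sound ((sc_inl_inl A B).mpr (Quotient.exact h))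
    · exact Quotient.sound ((sc_inr_inr A B).mpr (Quotient.exact h))
  · rintro (q | q)
    · obtain ⟨x, rfl⟩ := Quotient.exists_rep q
      exact ⟨Quotient.mk _ (Sum.inl x), rfl⟩
    · obtain ⟨y, rfl⟩ := Quotient.exists_rep q
      exact ⟨Quotient.mk _ (Sum.inr y), rfl⟩

end SumCongr

section PermCongr

variable {α β : Type*} (e : α ≃ β) (π : Equiv.Perm α)

lemma permCongr_zpow (i : ℤ) : (e.permCongr π) ^ i = e.permCongr (π ^ i) := by
  have h1 : ∀ n : ℕ, (e.permCongr π) ^ n = e.permCongr (π ^ n) := by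
    intro n
    induction n with
    | zero => ext x; simp
    | succ n ih => ext x; simp [pow_succ, Equiv.Perm.mul_apply, ih]
  rcases i with n | n
  · exact_mod_cast h1 n
  · rw [zpow_negSucc, zpow_negSucc, h1 (n + 1)]
    ext x
    simp [Equiv.Perm.inv_def, Equiv.permCongr, Equiv.equivCongr]

lemma sc_permCongr {x y : α} :
    (e.permCongr π).SameCycle (e x) (e y) ↔ π.SameCycle x y := by
  constructor
  · rintro ⟨i, hi⟩
    rw [permCongr_zpow] at hi
    simp only [Equiv.permCongr_apply, Equiv.symm_apply_apply] at hi
    exact ⟨i, e.injective hi⟩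
  · rintro ⟨i, hi⟩
    exact ⟨i, by rw [permCongr_zpow]; simp [hi]⟩

lemma card_quot_permCongr :
    Nat.card (Quotient (scs (e.permCongr π))) = Nat.card (Quotient (scs π)) := by
  refine Nat.card_eq_of_bijective (Quotient.congr e.symm ?_ : _ ≃ Quotient (scs π)).toFun
    (Equiv.bijective _)
  intro p q
  show (e.permCongr π).SameCycle p q ↔ π.SameCycle (e.symm p) (e.symm q)
  rw [← sc_permCongr e π, e.apply_symm_apply, e.apply_symm_apply]

end PermCongr

section Main

lemma sumPerm_mul_s1 {l m : ℕ} (A C : Equiv.Perm (Fin l)) (B D : Equiv.Perm (Fin m)) :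
    sumPerm A B * sumPerm C D = sumPerm (A * C) (B * D) := by
  ext x
  simp [sumPerm, Equiv.Perm.mul_apply, Equiv.permCongr_apply]

lemma sumPerm_inv_s1 {l m : ℕ} (A : Equiv.Perm (Fin l)) (B : Equiv.Perm (Fin m)) :
    (sumPerm A B)⁻¹ = sumPerm A⁻¹ B⁻¹ := by
  ext x
  simp [sumPerm, Equiv.Perm.inv_def, Equiv.permCongr, Equiv.equivCongr]

lemma rot_decomp (l' m' : ℕ) :
    finRotate (l' + 1 + (m' + 1)) =
      Equiv.swap (⟨0, by omega⟩ : Fin (l' + 1 + (m' + 1))) ⟨l' + 1, by omega⟩ *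
        sumPerm (finRotate (l' + 1)) (finRotate (m' + 1)) := by
  set N := l' + 1 + (m' + 1) with hN
  set a : Fin N := ⟨0, by omega⟩ with ha
  set b : Fin N := ⟨l' + 1, by omega⟩ with hb
  have hrot : ∀ i : Fin N, i ≠ Fin.last (l' + 1 + m') → ((finRotate N) i : ℕ) = (i : ℕ) + 1 :=
    fun i h => coe_finRotate_of_ne_last h
  have hrotlast : ((finRotate N) (Fin.last (l' + 1 + m')) : ℕ) = 0 :=
    congrArg Fin.val (finRotate_last)
  have key : ∀ s : Fin (l' + 1) ⊕ Fin (m' + 1),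
      finRotate N (finSumFinEquiv s) =
        (Equiv.swap a b) (sumPerm (finRotate (l' + 1)) (finRotate (m' + 1)) (finSumFinEquiv s)) := by
    rintro (j | j)
    · have hs : sumPerm (finRotate (l' + 1)) (finRotate (m' + 1)) (finSumFinEquiv (Sum.inl j)) =
          Fin.castAdd (m' + 1) (finRotate (l' + 1) j) := by
        simp [sumPerm, Equiv.permCongr_apply]
      rw [hs, finSumFinEquiv_apply_left]
      rcases eq_or_ne j (Fin.last l') with rfl | hj
      · have h1 : Fin.castAdd (m' + 1) (finRotate (l' + 1) (Fin.last l')) = a := by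
          rw [finRotate_last]
          exact Fin.ext (by simp [ha])
        rw [h1, Equiv.swap_apply_left]
        apply Fin.ext
        have hne' : Fin.castAdd (m' + 1) (Fin.last l') ≠ Fin.last (l' + 1 + m') := by
          apply Fin.ne_of_val_ne
          simp only [Fin.coe_castAdd, Fin.val_last]
          omega
        rw [hrot _ hne']
        simp [hb]
      · have hjv : (j : ℕ) < l' := by
          have h1 := j.isLt
          have h2 : (j : ℕ) ≠ l' := fun h => hj (Fin.ext (by rw [Fin.val_last]; exact h))
          omega
        have h2 : (finRotate (l' + 1) j : ℕ) = (j : ℕ) + 1 := coe_finRotate_of_ne_last hj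
        have hna : Fin.castAdd (m' + 1) (finRotate (l' + 1) j) ≠ a := by
          apply Fin.ne_of_val_ne
          simp only [Fin.coe_castAdd, h2, ha]
          omega
        have hnb : Fin.castAdd (m' + 1) (finRotate (l' + 1) j) ≠ b := by
          apply Fin.ne_of_val_ne
          simp only [Fin.coe_castAdd, h2, hb]
          omega
        rw [Equiv.swap_apply_of_ne_of_ne hna hnb]
        apply Fin.ext
        have hne' : Fin.castAdd (m' + 1) j ≠ Fin.last (l' + 1 + m') := by
          apply Fin.ne_of_val_ne
          simp only [Fin.coe_castAdd, Fin.val_last]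
          omega
        rw [hrot _ hne']
        simp only [Fin.coe_castAdd, h2]
    · have hs : sumPerm (finRotate (l' + 1)) (finRotate (m' + 1)) (finSumFinEquiv (Sum.inr j)) =
          Fin.natAdd (l' + 1) (finRotate (m' + 1) j) := by
        simp [sumPerm, Equiv.permCongr_apply]
      rw [hs, finSumFinEquiv_apply_right]
      rcases eq_or_ne j (Fin.last m') with rfl | hj
      · have h1 : Fin.natAdd (l' + 1) (finRotate (m' + 1) (Fin.last m')) = b := by
          rw [finRotate_last]
          exact Fin.ext (by simp [hb])
        rw [h1, Equiv.swap_apply_right]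
        apply Fin.ext
        have h3 : (Fin.natAdd (l' + 1) (Fin.last m') : Fin N) = Fin.last (l' + 1 + m') := by
          apply Fin.ext
          simp only [Fin.coe_natAdd, Fin.val_last]
        rw [h3, hrotlast]
      · have hjv : (j : ℕ) < m' := by
          have h1 := j.isLt
          have h2 : (j : ℕ) ≠ m' := fun h => hj (Fin.ext (by rw [Fin.val_last]; exact h))
          omega
        have h2 : (finRotate (m' + 1) j : ℕ) = (j : ℕ) + 1 := coe_finRotate_of_ne_last hj
        have hna : Fin.natAdd (l' + 1) (finRotate (m' + 1) j) ≠ a := by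
          apply Fin.ne_of_val_ne
          simp only [Fin.coe_natAdd, h2, ha]
          omega
        have hnb : Fin.natAdd (l' + 1) (finRotate (m' + 1) j) ≠ b := by
          apply Fin.ne_of_val_ne
          simp only [Fin.coe_natAdd, h2, hb]
          omega
        rw [Equiv.swap_apply_of_ne_of_ne hna hnb]
        apply Fin.ext
        have hne' : Fin.natAdd (l' + 1) j ≠ Fin.last (l' + 1 + m') := by
          apply Fin.ne_of_val_ne
          simp only [Fin.coe_natAdd, Fin.val_last]
          omega
        rw [hrot _ hne']
        simp only [Fin.coe_natAdd, h2]
        omega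
  apply Equiv.ext
  intro i
  rw [Equiv.Perm.mul_apply]
  have := key (finSumFinEquiv.symm i)
  rwa [Equiv.apply_symm_apply] at this

/-- For `k = l + m` with `l, m ≥ 1`, `σ₁ ∈ S_l`, `σ₂ ∈ S_m`:
`c((σ₁ ⊕ σ₂)·γ_k⁻¹) = c(σ₁·γ_l⁻¹) + c(σ₂·γ_m⁻¹) − 1`, where `c` is the number of
orbits (fixed points included) and `γ_n = finRotate n` is the cycle `(1,…,n)`. -/
theorem cyc_sumPerm_mul_rotate_inv {l m : ℕ} (hl : 1 ≤ l) (hm : 1 ≤ m)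
    (σ₁ : Equiv.Perm (Fin l)) (σ₂ : Equiv.Perm (Fin m)) :
    cyc (sumPerm σ₁ σ₂ * (finRotate (l + m))⁻¹) + 1 =
      cyc (σ₁ * (finRotate l)⁻¹) + cyc (σ₂ * (finRotate m)⁻¹) := by
  obtain ⟨l', rfl⟩ : ∃ l', l = l' + 1 := ⟨l - 1, by omega⟩
  obtain ⟨m', rfl⟩ : ∃ m', m = m' + 1 := ⟨m - 1, by omega⟩
  set a : Fin (l' + 1 + (m' + 1)) := ⟨0, by omega⟩ with ha
  set b : Fin (l' + 1 + (m' + 1)) := ⟨l' + 1, by omega⟩ with hb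
  set A := σ₁ * (finRotate (l' + 1))⁻¹ with hA
  set B := σ₂ * (finRotate (m' + 1))⁻¹ with hB
  have hτ : sumPerm σ₁ σ₂ * (finRotate (l' + 1 + (m' + 1)))⁻¹ = sumPerm A B * Equiv.swap a b := by
    rw [rot_decomp, mul_inv_rev, Equiv.swap_inv, sumPerm_inv_s1, ← mul_assoc, sumPerm_mul_s1]
  have hea : finSumFinEquiv (Sum.inl (0 : Fin (l' + 1))) = a := Fin.ext (by simp [ha])
  have heb : finSumFinEquiv (Sum.inr (0 : Fin (m' + 1))) = b := Fin.ext (by simp [hb])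
  have hab : ¬ (sumPerm A B).SameCycle a b := by
    rw [← hea, ← heb]
    intro h
    exact sc_inl_inr A B ((sc_permCongr finSumFinEquiv (Equiv.sumCongr A B)).mp h)
  have key := card_quot_mul_swap (sumPerm A B) a b hab
  have e1 : cyc (sumPerm σ₁ σ₂ * (finRotate (l' + 1 + (m' + 1)))⁻¹) =
      Nat.card (Quotient (scs (sumPerm A B * Equiv.swap a b))) := by rw [hτ]; rfl
  have e2 : Nat.card (Quotient (scs (sumPerm A B))) =
      Nat.card (Quotient (scs A)) + Nat.card (Quotient (scs B)) := by
    rw [show sumPerm A B = finSumFinEquiv.permCongr (Equiv.sumCongr A B) from rfl,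
      card_quot_permCongr, card_quot_sumCongr]
  have e3 : cyc A = Nat.card (Quotient (scs A)) := rfl
  have e4 : cyc B = Nat.card (Quotient (scs B)) := rfl
  rw [e1, key, e2, ← e3, ← e4]

end Main
end

section
/- Fix integers N, k ≥ 1. Let D ∈ End((ℂ^N)^{⊗k}) be diagonal in the canonical product basis, i.e. D(e_{i₁}⊗⋯⊗e_{i_k}) = c_{(i₁,…,i_k)}·e_{i₁}⊗⋯⊗e_{i_k} for scalars c_{(i₁,…,i_k)}. If D commutes with g^{⊗k} for every N×N permutation matrix g, then c_{(i₁,…,i_k)} depends only on the set partition Ker(i₁,…,i_k) of {1,…,k} (the partition in which u and v are in the same block iff i_u = i_v); equivalently, D = Σ_π c_π Δ_π^c, a linear combination over set partitions π of {1,…,k}, where Δ_π^c is the diagonal operator whose entry at (i₁,…,i_k) is 1 if Ker(i₁,…,i_k) = π and 0 otherwise. -/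
/-- the tensor power of the permutation matrix of `g : S_N`, acting on `(ℂ^N)^{⊗k}`
(whose canonical basis is indexed by tuples `Fin k → Fin N`). -/
def permTensorMatrix (N k : ℕ) (g : Equiv.Perm (Fin N)) :
    Matrix (Fin k → Fin N) (Fin k → Fin N) ℂ :=
  Matrix.of fun x y : Fin k → Fin N => if x = g ∘ y then (1 : ℂ) else 0

/-- If a diagonal (in the canonical product basis) endomorphism `D` of
`(ℂ^N)^{⊗k}`, with diagonal entries `c`, commutes with `g^{⊗k}` for every `N × N`
permutation matrix `g`, then its entries depend only on the kernel set partition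
`Ker(i₁,…,i_k)` of the index tuple. -/
theorem diagonal_comm_perm_entries_kernel {N k : ℕ} (c : (Fin k → Fin N) → ℂ)
    (hcomm : ∀ g : Equiv.Perm (Fin N),
      Matrix.diagonal c * permTensorMatrix N k g = permTensorMatrix N k g * Matrix.diagonal c)
    (i i' : Fin k → Fin N) (hker : ∀ u v : Fin k, i u = i v ↔ i' u = i' v) :
    c i = c i' := by
  classical
  -- Step 1: commutation gives invariance under permutations
  have key : ∀ (g : Equiv.Perm (Fin N)) (y : Fin k → Fin N), c (g ∘ y) = c y := by
    intro g y
    have h := congrFun (congrFun (hcomm g) (g ∘ y)) y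
    simpa [Matrix.diagonal_mul, Matrix.mul_diagonal, permTensorMatrix] using h
  -- Step 2: construct a permutation σ with σ ∘ i = i'
  set S : Set (Fin N) := Set.range i with hS
  set T : Set (Fin N) := Set.range i' with hT
  let f : S → T := fun x => ⟨i' x.2.choose, Set.mem_range_self _⟩
  have hf : Function.Bijective f := by
    constructor
    · rintro ⟨x₁, h₁⟩ ⟨x₂, h₂⟩ hfe
      have : i' h₁.choose = i' h₂.choose := congrArg Subtype.val hfe
      have : i h₁.choose = i h₂.choose := (hker _ _).2 this
      refine Subtype.ext ?_
      show x₁ = x₂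
      rw [← h₁.choose_spec, ← h₂.choose_spec, this]
    · rintro ⟨y, hy⟩
      obtain ⟨u, hu⟩ := hy
      refine ⟨⟨i u, Set.mem_range_self u⟩, Subtype.ext ?_⟩
      have hc : i (Set.mem_range_self (f := i) u).choose = i u :=
        (Set.mem_range_self u).choose_spec
      have := (hker _ _).1 hc
      simp only [f]
      rw [this, hu]
  let e : S ≃ T := Equiv.ofBijective f hf
  have hcard : Fintype.card ↥Sᶜ = Fintype.card ↥Tᶜ := by
    have h1 : Fintype.card S = Fintype.card T := Fintype.card_congr e
    rw [Fintype.card_compl_set, Fintype.card_compl_set, h1]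
  let e' : ↥Sᶜ ≃ ↥Tᶜ := Fintype.equivOfCardEq hcard
  let σ : Equiv.Perm (Fin N) :=
    (Equiv.Set.sumCompl S).symm.trans ((Equiv.sumCongr e e').trans (Equiv.Set.sumCompl T))
  have hσ : σ ∘ i = i' := by
    funext u
    have hmem : i u ∈ S := Set.mem_range_self u
    have h1 : (Equiv.Set.sumCompl S).symm (i u) = Sum.inl ⟨i u, hmem⟩ :=
      Equiv.Set.sumCompl_symm_apply (s := S) (x := ⟨i u, hmem⟩)
    have h2 : σ (i u) = (e ⟨i u, hmem⟩ : Fin N) := by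
      simp [σ, h1]
    have hc : i (hmem.choose) = i u := hmem.choose_spec
    have h3 : (e ⟨i u, hmem⟩ : Fin N) = i' hmem.choose := rfl
    rw [Function.comp_apply, h2, h3, (hker _ _).1 hc]
  calc c i = c (σ ∘ i) := (key σ i).symm
    _ = c i' := by rw [hσ]
end

section
/- For a set partition π of {1,…,k}, let Δ_π ∈ End((ℂ^N)^{⊗k}) be the diagonal operator whose entry at the tuple (i₁,…,i_k) ∈ {1,…,N}^k is 1 if i_u = i_v whenever u and v lie in the same block of π (i.e. π refines Ker(i₁,…,i_k)), and 0 otherwise. If N ≥ k, then the family (Δ_π), indexed by all set partitions π of {1,…,k}, is linearly independent in End((ℂ^N)^{⊗k}). -/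
open scoped Classical

/-- For a set partition `π` of `{1,…,k}` (modelled as a setoid on `Fin k`), `Δ_π` is the
diagonal operator on `(ℂ^N)^{⊗k}` whose entry at the tuple `i : Fin k → Fin N` is `1` if
`π` refines the kernel of `i` (i.e. `i` is constant on the blocks of `π`) and `0` otherwise. -/
noncomputable def DeltaOp (N k : ℕ) (π : Setoid (Fin k)) :
    Matrix (Fin k → Fin N) (Fin k → Fin N) ℂ :=
  Matrix.diagonal fun i : Fin k → Fin N =>
    if ∀ u v : Fin k, π.r u v → i u = i v then (1 : ℂ) else 0

/-!
Evaluating at a tuple `i` whose kernel is exactly `π` (it exists since `N ≥ k`), the diagonal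
entry of `Δ_σ` is `1` if `σ ≤ π` and `0` otherwise. So the family is unitriangular with respect
to the refinement order on the finite lattice of partitions, and a vanishing linear combination
has all its coefficients zero, by induction from the finest partition upwards.
-/

instance Setoid.finite {α : Type*} [Finite α] : Finite (Setoid α) :=
  Finite.of_injective (fun r : Setoid α => r.r) fun _ _ h =>
    Setoid.ext fun x y => iff_of_eq congr($h x y)

theorem Setoid.exists_ker_eq {α β : Type*} [Fintype α] [Fintype β]
    (h : Fintype.card α ≤ Fintype.card β) (r : Setoid α) : ∃ f : α → β, Setoid.ker f = r := by
  obtain ⟨e⟩ := Function.Embedding.nonempty_of_card_le ((Fintype.card_quotient_le r).trans h)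
  refine ⟨fun a => e ⟦a⟧, Setoid.ext fun a b => ?_⟩
  rw [Setoid.ker_def, e.injective.eq_iff, Quotient.eq]

theorem linearIndependent_of_triangular {ι R M : Type*} [PartialOrder ι] [WellFoundedLT ι]
    [Ring R] [NoZeroDivisors R] [AddCommGroup M] [Module R M] (v : ι → M) (φ : ι → M →ₗ[R] R)
    (hdiag : ∀ i, φ i (v i) ≠ 0) (htriang : ∀ i j, φ i (v j) ≠ 0 → j ≤ i) :
    LinearIndependent R v := by
  rw [linearIndependent_iff']
  intro s g hsum i
  induction i using WellFoundedLT.induction with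
  | ind i IH =>
    intro hi
    have heval : φ i (∑ j ∈ s, g j • v j) = g i * φ i (v i) := by
      rw [map_sum, Finset.sum_eq_single_of_mem i hi fun j hj hji => ?_, map_smul, smul_eq_mul]
      by_cases hij : φ i (v j) = 0
      · rw [map_smul, hij, smul_zero]
      · rw [IH j (lt_of_le_of_ne (htriang i j hij) hji) hj, zero_smul, map_zero]
    rw [hsum, map_zero] at heval
    exact (mul_eq_zero.mp heval.symm).resolve_right (hdiag i)

theorem deltaOp_apply_self {N k : ℕ} (π : Setoid (Fin k)) (i : Fin k → Fin N) :
    DeltaOp N k π i i = if π ≤ Setoid.ker i then 1 else 0 := by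
  simp only [DeltaOp, Matrix.diagonal_apply_eq, Setoid.le_def, Setoid.ker_def]

/-- If `N ≥ k`, the family `(Δ_π)`, indexed by all set partitions `π`
of `{1,…,k}`, is linearly independent in `End((ℂ^N)^{⊗k})`. -/
theorem deltaOp_linearIndependent {N k : ℕ} (h : k ≤ N) :
    LinearIndependent ℂ (fun π : Setoid (Fin k) => DeltaOp N k π) := by
  choose tuple htuple using fun π : Setoid (Fin k) =>
    Setoid.exists_ker_eq (β := Fin N) (by simpa using h) π
  refine linearIndependent_of_triangular _
    (fun π => Matrix.entryLinearMap ℂ ℂ (tuple π) (tuple π)) (fun π => ?_) (fun π σ hσ => ?_)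
  · simp [deltaOp_apply_self, htuple]
  · simp only [Matrix.entryLinearMap_apply, deltaOp_apply_self, htuple] at hσ
    exact of_not_not fun hle => hσ (if_neg hle)
end

section
/- Let (X₁,…,X_k) be real random variables with finite moments of all orders, let l ≥ k, and let (X₁ⁿ,…,X_kⁿ) for n = 1,…,l be independent copies of (X₁,…,X_k), independent of one another. For 1 ≤ i ≤ k set M_i = Diag(X_i¹,…,X_i^l), a random l×l diagonal matrix. Then E[M₁⊗⋯⊗M_k] = Σ_π (Π_{b∈π} cum_{|b|}((X_i)_{i∈b})) · Δ_π, the sum over all set partitions π of {1,…,k}; in particular, since (Δ_π)_π is linearly independent when l ≥ k, the coefficient of Δ_π in this (unique) decomposition of E[M₁⊗⋯⊗M_k] equals Π_{b∈π} cum_{|b|}((X_i)_{i∈b}), and for π the one-block partition it equals the classical cumulant cum_k(X₁,…,X_k). -/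
/-!
Group the product `∏ᵢ X_i^{n(i)}` by the fibres of `n`. Different fibres involve different,
independent copies, so the expectation factors as `∏_m E[∏_{i ∈ n⁻¹(m)} X_i]`, and the
moment–cumulant formula expands each factor as a sum over partitions of the fibre. Choosing a
partition of every fibre is the same as choosing one partition of `{1,…,k}` whose blocks lie in
fibres, i.e. one refining the kernel of `n`.
-/

open scoped Classical
open MeasureTheory ProbabilityTheory

/-- `P` is a partition of the finite set `s` into (nonempty, pairwise disjoint) blocks. -/
def IsPartitionOf {k : ℕ} (P : Finset (Finset (Fin k))) (s : Finset (Fin k)) : Prop :=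
  (∀ b ∈ P, b.Nonempty) ∧ (∀ b ∈ P, b ⊆ s) ∧
    (∀ b ∈ P, ∀ b' ∈ P, b ≠ b' → Disjoint b b') ∧ (∀ i ∈ s, ∃ b ∈ P, i ∈ b)

open Finset

theorem integral_prod_copies_eq_prod_integral_fiber {Ω ι κ 𝕜 : Type*} [MeasurableSpace Ω]
    {μ : Measure Ω} [Fintype ι] [DecidableEq ι] [Fintype κ] [RCLike 𝕜]
    (X : κ → Ω → 𝕜) (Xc : ι → κ → Ω → 𝕜)
    (hindep : iIndepFun (fun m ω i => Xc m i ω) μ)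
    (hid : ∀ m, IdentDistrib (fun ω i => Xc m i ω) (fun ω i => X i ω) μ μ) (n : κ → ι) :
    ∫ ω, ∏ i, Xc (n i) i ω ∂μ = ∏ m, ∫ ω, ∏ i ∈ univ.filter (n · = m), X i ω ∂μ := by
  have hf : ∀ m, Measurable fun v : κ → 𝕜 => ∏ i ∈ univ.filter (n · = m), v i := fun m =>
    Finset.measurable_prod _ fun i _ => measurable_pi_apply i
  calc ∫ ω, ∏ i, Xc (n i) i ω ∂μ = ∫ ω, ∏ m, ∏ i ∈ univ.filter (n · = m), Xc m i ω ∂μ := by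
        congr with ω
        rw [← prod_fiberwise univ n]
        exact prod_congr rfl fun m _ => prod_congr rfl fun i hi => by rw [(mem_filter.1 hi).2]
    _ = ∏ m, ∫ ω, ∏ i ∈ univ.filter (n · = m), Xc m i ω ∂μ :=
        hindep.integral_fun_prod_comp (fun m => (hid m).aemeasurable_fst)
          fun m => (hf m).aestronglyMeasurable
    _ = _ := by
        congr with m
        exact ((hid m).comp (hf m)).integral_eq

theorem isPartitionOf_empty_iff {k : ℕ} {P : Finset (Finset (Fin k))} :
    IsPartitionOf P ∅ ↔ P = ∅ := by
  refine ⟨fun ⟨hne, hsub, _⟩ => eq_empty_of_forall_notMem fun b hb => ?_, ?_⟩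
  · obtain ⟨x, hx⟩ := hne b hb
    exact notMem_empty x (hsub b hb hx)
  · rintro rfl
    simp [IsPartitionOf]

theorem integral_prod_eq_sum_isPartitionOf {Ω : Type*} [MeasurableSpace Ω] {μ : Measure Ω}
    [IsProbabilityMeasure μ] {k : ℕ} {X : Fin k → Ω → ℝ} {cum : Finset (Fin k) → ℝ}
    (hcum : ∀ s : Finset (Fin k), s.Nonempty →
      ∫ ω, ∏ i ∈ s, X i ω ∂μ = ∑ P ∈ univ.filter (IsPartitionOf · s), ∏ b ∈ P, cum b)
    (s : Finset (Fin k)) :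
    ∫ ω, ∏ i ∈ s, X i ω ∂μ = ∑ P ∈ univ.filter (IsPartitionOf · s), ∏ b ∈ P, cum b := by
  obtain rfl | hs := s.eq_empty_or_nonempty
  · have : univ.filter (IsPartitionOf · (∅ : Finset (Fin k))) = {∅} := by
      ext P; simp [isPartitionOf_empty_iff]
    simp [this]
  · exact hcum s hs

section Fibers

variable {k : ℕ} {ι : Type*} [DecidableEq ι] (n : Fin k → ι)

theorem eq_of_nonempty_subset_fiber {b : Finset (Fin k)} (hb : b.Nonempty) {m m' : ι}
    (h : b ⊆ univ.filter (n · = m)) (h' : b ⊆ univ.filter (n · = m')) : m = m' := by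
  obtain ⟨x, hx⟩ := hb
  exact (mem_filter.1 (h hx)).2.symm.trans (mem_filter.1 (h' hx)).2

variable {n}

theorem isPartitionOf_filter_subset_fiber {P : Finset (Finset (Fin k))}
    (hP : IsPartitionOf P univ) (href : ∀ b ∈ P, ∀ u ∈ b, ∀ v ∈ b, n u = n v) (m : ι) :
    IsPartitionOf (P.filter (· ⊆ univ.filter (n · = m))) (univ.filter (n · = m)) := by
  obtain ⟨hne, -, hdisj, hcov⟩ := hP
  refine ⟨fun b hb => hne b (mem_filter.1 hb).1, fun b hb => (mem_filter.1 hb).2,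
    fun b hb b' hb' => hdisj b (mem_filter.1 hb).1 b' (mem_filter.1 hb').1, fun i hi => ?_⟩
  obtain ⟨b, hb, hib⟩ := hcov i (mem_univ i)
  refine ⟨b, mem_filter.2 ⟨hb, fun u hu => mem_filter.2 ⟨mem_univ u, ?_⟩⟩, hib⟩
  exact (href b hb u hu i hib).trans (mem_filter.1 hi).2

variable [Fintype ι]

theorem isPartitionOf_biUnion_fiber {g : ι → Finset (Finset (Fin k))}
    (hg : ∀ m, IsPartitionOf (g m) (univ.filter (n · = m))) :
    IsPartitionOf (univ.biUnion g) univ ∧ ∀ b ∈ univ.biUnion g, ∀ u ∈ b, ∀ v ∈ b, n u = n v := by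
  have mem_fiber {b m} (hb : b ∈ g m) {u} (hu : u ∈ b) : n u = m :=
    (mem_filter.1 ((hg m).2.1 b hb hu)).2
  refine ⟨⟨fun b hb => ?_, fun b _ => subset_univ b, fun b hb b' hb' hne => ?_, fun i _ => ?_⟩,
    fun b hb u hu v hv => ?_⟩
  · obtain ⟨m, -, hbm⟩ := mem_biUnion.1 hb
    exact (hg m).1 b hbm
  · obtain ⟨m, -, hbm⟩ := mem_biUnion.1 hb
    obtain ⟨m', -, hbm'⟩ := mem_biUnion.1 hb'
    rcases eq_or_ne m m' with rfl | hmm'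
    · exact (hg m).2.2.1 b hbm b' hbm' hne
    · exact disjoint_left.2 fun i hi hi' =>
        hmm' ((mem_fiber hbm hi).symm.trans (mem_fiber hbm' hi'))
  · obtain ⟨b, hb, hib⟩ := (hg (n i)).2.2.2 i (mem_filter.2 ⟨mem_univ i, rfl⟩)
    exact ⟨b, mem_biUnion.2 ⟨n i, mem_univ _, hb⟩, hib⟩
  · obtain ⟨m, -, hbm⟩ := mem_biUnion.1 hb
    exact (mem_fiber hbm hu).trans (mem_fiber hbm hv).symm

theorem filter_subset_fiber_biUnion {g : ι → Finset (Finset (Fin k))}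
    (hg : ∀ m, IsPartitionOf (g m) (univ.filter (n · = m))) (m : ι) :
    (univ.biUnion g).filter (· ⊆ univ.filter (n · = m)) = g m := by
  ext b
  simp only [mem_filter, mem_biUnion, mem_univ, true_and]
  refine ⟨fun ⟨⟨m', hbm'⟩, hsub⟩ => ?_, fun hb => ⟨⟨m, hb⟩, (hg m).2.1 b hb⟩⟩
  rwa [eq_of_nonempty_subset_fiber n ((hg m').1 b hbm') ((hg m').2.1 b hbm') hsub] at hbm'

theorem biUnion_filter_subset_fiber {P : Finset (Finset (Fin k))} (hne : ∀ b ∈ P, b.Nonempty)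
    (href : ∀ b ∈ P, ∀ u ∈ b, ∀ v ∈ b, n u = n v) :
    univ.biUnion (fun m => P.filter (· ⊆ univ.filter (n · = m))) = P := by
  ext b
  simp only [mem_biUnion, mem_univ, mem_filter, true_and]
  refine ⟨fun ⟨_, hb, _⟩ => hb, fun hb => ?_⟩
  obtain ⟨x, hx⟩ := hne b hb
  exact ⟨n x, hb, fun u hu => mem_filter.2 ⟨mem_univ u, href b hb u hu x hx⟩⟩

theorem prod_sum_isPartitionOf_fiber {R : Type*} [CommSemiring R] (f : Finset (Fin k) → R) :
    ∏ m, ∑ P ∈ univ.filter (IsPartitionOf · (univ.filter (n · = m))), ∏ b ∈ P, f b =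
      ∑ P ∈ univ.filter (fun P => IsPartitionOf P univ ∧ ∀ b ∈ P, ∀ u ∈ b, ∀ v ∈ b, n u = n v),
        ∏ b ∈ P, f b := by
  rw [prod_univ_sum]
  refine sum_nbij' (fun g => univ.biUnion g) (fun P m => P.filter (· ⊆ univ.filter (n · = m)))
    (fun g hg => ?_) (fun P hP => ?_) (fun g hg => ?_) (fun P hP => ?_) (fun g hg => ?_)
  · simp only [mem_filter, Fintype.mem_piFinset, mem_univ, true_and] at hg ⊢
    exact isPartitionOf_biUnion_fiber hg
  · simp only [mem_filter, Fintype.mem_piFinset, mem_univ, true_and] at hP ⊢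
    exact isPartitionOf_filter_subset_fiber hP.1 hP.2
  · simp only [Fintype.mem_piFinset, mem_filter, mem_univ, true_and] at hg
    exact funext (filter_subset_fiber_biUnion hg)
  · simp only [mem_filter, mem_univ, true_and] at hP
    exact biUnion_filter_subset_fiber hP.1.1 hP.2
  · simp only [Fintype.mem_piFinset, mem_filter, mem_univ, true_and] at hg
    refine (prod_biUnion fun m _ m' _ hmm' => disjoint_left.2 fun b hb hb' => hmm' ?_).symm
    exact eq_of_nonempty_subset_fiber n ((hg m).1 b hb) ((hg m).2.1 b hb) ((hg m').2.1 b hb')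

end Fibers

theorem expectation_tensor_diag_eq_cumulant_sum_general
    {Ω : Type*} [MeasurableSpace Ω] (μ : Measure Ω) [IsProbabilityMeasure μ]
    {k l : ℕ}
    (X : Fin k → Ω → ℝ) (Xc : Fin l → Fin k → Ω → ℝ)
    (hindep : iIndepFun (fun n : Fin l => fun ω => fun i => Xc n i ω) μ)
    (hid : ∀ n : Fin l,
      IdentDistrib (fun ω => fun i => Xc n i ω) (fun ω => fun i => X i ω) μ μ)
    (cum : Finset (Fin k) → ℝ)
    (hcum : ∀ s : Finset (Fin k), s.Nonempty →
      (∫ ω, ∏ i ∈ s, X i ω ∂μ) =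
        ∑ P ∈ Finset.univ.filter (fun P : Finset (Finset (Fin k)) => IsPartitionOf P s),
          ∏ b ∈ P, cum b)
    (n : Fin k → Fin l) :
    (∫ ω, ∏ i, Xc (n i) i ω ∂μ) =
      ∑ P ∈ Finset.univ.filter (fun P : Finset (Finset (Fin k)) =>
          IsPartitionOf P Finset.univ ∧ ∀ b ∈ P, ∀ u ∈ b, ∀ v ∈ b, n u = n v),
        ∏ b ∈ P, cum b := by
  rw [integral_prod_copies_eq_prod_integral_fiber X Xc hindep hid n]
  exact (prod_congr rfl fun m _ => integral_prod_eq_sum_isPartitionOf hcum _).trans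
    (prod_sum_isPartitionOf_fiber cum)

/-- Let `(X₁,…,X_k)` be real random variables with all moments finite,
`l ≥ k`, and let `(X₁ⁿ,…,X_kⁿ)`, `n = 1,…,l`, be i.i.d. copies of `(X₁,…,X_k)`.
Set `M_i = Diag(X_i¹,…,X_i^l)`.  If `cum` satisfies the classical moment–cumulant
relation for the family `(X₁,…,X_k)`, then the diagonal entry of `E[M₁⊗⋯⊗M_k]` at a tuple
`n : Fin k → Fin l` is `∑_{π refining Ker n} ∏_{b∈π} cum b`; i.e.
`E[M₁⊗⋯⊗M_k] = ∑_π (∏_{b∈π} cum_{|b|}((X_i)_{i∈b})) · Δ_π`, and since the `Δ_π` are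
linearly independent for `l ≥ k`, the coefficient of `Δ_π` is `∏_{b∈π} cum_{|b|}((X_i)_{i∈b})`;
for the one-block partition it is the classical cumulant `cum_k(X₁,…,X_k)`. -/
theorem expectation_tensor_diag_eq_cumulant_sum
    {Ω : Type*} [MeasurableSpace Ω] (μ : Measure Ω) [IsProbabilityMeasure μ]
    {k l : ℕ} (hkl : k ≤ l)
    (X : Fin k → Ω → ℝ) (Xc : Fin l → Fin k → Ω → ℝ)
    (hmeas : ∀ n i, Measurable (Xc n i))
    (hint : ∀ s : Finset (Fin l × Fin k), Integrable (fun ω => ∏ q ∈ s, Xc q.1 q.2 ω) μ)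
    (hindep : iIndepFun (fun n : Fin l => fun ω => fun i => Xc n i ω) μ)
    (hid : ∀ n : Fin l,
      IdentDistrib (fun ω => fun i => Xc n i ω) (fun ω => fun i => X i ω) μ μ)
    (cum : Finset (Fin k) → ℝ)
    (hcum : ∀ s : Finset (Fin k), s.Nonempty →
      (∫ ω, ∏ i ∈ s, X i ω ∂μ) =
        ∑ P ∈ Finset.univ.filter (fun P : Finset (Finset (Fin k)) => IsPartitionOf P s),
          ∏ b ∈ P, cum b)
    (n : Fin k → Fin l) :
    (∫ ω, ∏ i, Xc (n i) i ω ∂μ) =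
      ∑ P ∈ Finset.univ.filter (fun P : Finset (Finset (Fin k)) =>
          IsPartitionOf P Finset.univ ∧ ∀ b ∈ P, ∀ u ∈ b, ∀ v ∈ b, n u = n v),
        ∏ b ∈ P, cum b :=
  expectation_tensor_diag_eq_cumulant_sum_general μ X Xc hindep hid cum hcum n
end

section
/- Let (X_t)_{t≥0} be a matrix-valued Lévy process (additive or multiplicative) in M_N(ℂ) all of whose entries have finite moments of all orders, and suppose that for every k ≥ 1 the map t ↦ E[X_t^{⊗k}] is differentiable at t = 0, with derivative G_k. Then for every k ≥ 1 and every t₀ ≥ 0 the map t ↦ E[X_t^{⊗k}] is differentiable at t₀, and: (1) if (X_t) is an additive Lévy process, (d/dt)|_{t=t₀} E[X_t^{⊗k}] = Σ_{l=0}^{k−1} Σ_{I ⊆ {1,…,k}, |I| = l} 𝓘_I(E[X_{t₀}^{⊗l}], G_{k−l}); (2) if (X_t) is a multiplicative Lévy process, (d/dt)|_{t=t₀} E[X_t^{⊗k}] = G_k · E[X_{t₀}^{⊗k}]. -/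
open scoped Classical
open MeasureTheory ProbabilityTheory

/-- the entry at `(r, c)` of `E[X^{⊗k}]` for a random matrix `X`. -/
noncomputable def tensMom {N k : ℕ} {Ω : Type*} [MeasurableSpace Ω] (μ : Measure Ω)
    (X : Ω → Matrix (Fin N) (Fin N) ℂ) (r c : Fin k → Fin N) : ℂ :=
  ∫ ω, ∏ s, X ω (r s) (c s) ∂μ

/-- the entry at `(r, c)` of the insertion operator `𝓘_I(A, B) = P(σ_I)⁻¹ (A ⊗ B) P(σ_I)`,
which lets `A` act on the tensor slots in `I` (in increasing order) and `B` on the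
remaining slots. -/
noncomputable def insEntry {N k : ℕ} (I : Finset (Fin k))
    (A : (Fin I.card → Fin N) → (Fin I.card → Fin N) → ℂ)
    (B : (Fin Iᶜ.card → Fin N) → (Fin Iᶜ.card → Fin N) → ℂ)
    (r c : Fin k → Fin N) : ℂ :=
  A (fun t => r (I.orderIsoOfFin rfl t)) (fun t => c (I.orderIsoOfFin rfl t)) *
    B (fun t => r (Iᶜ.orderIsoOfFin rfl t)) (fun t => c (Iᶜ.orderIsoOfFin rfl t))

/-- `(X_t)_{t ≥ 0}` is an additive matrix Lévy process: `X₀ = 0`; càdlàg paths;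
stochastic continuity; independent and stationary increments. -/
def IsAdditiveLevy {N : ℕ} {Ω : Type*} [MeasurableSpace Ω] (μ : Measure Ω)
    (X : ℝ → Ω → Matrix (Fin N) (Fin N) ℂ) : Prop :=
  (∀ ω, X 0 ω = 0) ∧
  (∀ ω (r s : Fin N) (t₀ : ℝ), 0 ≤ t₀ →
    ContinuousWithinAt (fun t => X t ω r s) (Set.Ici t₀) t₀ ∧
      (0 < t₀ → ∃ Llim : ℂ,
        Filter.Tendsto (fun t => X t ω r s) (nhdsWithin t₀ (Set.Iio t₀ ∩ Set.Ici 0))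
          (nhds Llim))) ∧
  (∀ (r s : Fin N) (t₀ : ℝ), 0 ≤ t₀ → ∀ ε : ℝ, 0 < ε →
    Filter.Tendsto (fun t => μ {ω | ε ≤ ‖X t ω r s - X t₀ ω r s‖})
      (nhdsWithin t₀ (Set.Ici 0)) (nhds 0)) ∧
  (∀ t s : ℝ, 0 ≤ t → t ≤ s →
    IndepFun (fun ω => fun rc : Fin N × Fin N => (X s ω - X t ω) rc.1 rc.2)
      (fun ω => fun q : {u : ℝ // 0 ≤ u ∧ u ≤ t} × Fin N × Fin N =>
        X q.1 ω q.2.1 q.2.2) μ) ∧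
  (∀ t s : ℝ, 0 ≤ t → t ≤ s →
    Measure.map (fun ω => fun rc : Fin N × Fin N => (X s ω - X t ω) rc.1 rc.2) μ =
      Measure.map (fun ω => fun rc : Fin N × Fin N => X (s - t) ω rc.1 rc.2) μ)

/-- `(X_t)_{t ≥ 0}` is a multiplicative matrix Lévy process: `X₀ = 1`, values in `GL_N(ℂ)`;
càdlàg paths; stochastic continuity; independent and stationary multiplicative increments
`X_s X_t⁻¹`. -/
def IsMultiplicativeLevy {N : ℕ} {Ω : Type*} [MeasurableSpace Ω] (μ : Measure Ω)
    (X : ℝ → Ω → Matrix (Fin N) (Fin N) ℂ) : Prop :=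
  (∀ ω, X 0 ω = 1) ∧
  (∀ (t : ℝ) ω, 0 ≤ t → IsUnit (X t ω)) ∧
  (∀ ω (r s : Fin N) (t₀ : ℝ), 0 ≤ t₀ →
    ContinuousWithinAt (fun t => X t ω r s) (Set.Ici t₀) t₀ ∧
      (0 < t₀ → ∃ Llim : ℂ,
        Filter.Tendsto (fun t => X t ω r s) (nhdsWithin t₀ (Set.Iio t₀ ∩ Set.Ici 0))
          (nhds Llim))) ∧
  (∀ (r s : Fin N) (t₀ : ℝ), 0 ≤ t₀ → ∀ ε : ℝ, 0 < ε →
    Filter.Tendsto (fun t => μ {ω | ε ≤ ‖X t ω r s - X t₀ ω r s‖})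
      (nhdsWithin t₀ (Set.Ici 0)) (nhds 0)) ∧
  (∀ t s : ℝ, 0 ≤ t → t ≤ s →
    IndepFun (fun ω => fun rc : Fin N × Fin N => (X s ω * Ring.inverse (X t ω)) rc.1 rc.2)
      (fun ω => fun q : {u : ℝ // 0 ≤ u ∧ u ≤ t} × Fin N × Fin N =>
        X q.1 ω q.2.1 q.2.2) μ) ∧
  (∀ t s : ℝ, 0 ≤ t → t ≤ s →
    Measure.map
        (fun ω => fun rc : Fin N × Fin N => (X s ω * Ring.inverse (X t ω)) rc.1 rc.2) μ =
      Measure.map (fun ω => fun rc : Fin N × Fin N => X (s - t) ω rc.1 rc.2) μ)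

/-!
Independence and stationarity of the increments give, for `0 ≤ t ≤ s`, the semigroup identities
`E[X_s^{⊗k}] = ∑_I 𝓘_I(E[X_t^{⊗|I|}], E[X_{s-t}^{⊗(k-|I|)}])` in the additive case and
`E[X_s^{⊗k}] = E[X_{s-t}^{⊗k}] E[X_t^{⊗k}]` in the multiplicative case. Subtracting the case
`s = t` writes `E[X_s^{⊗k}] - E[X_t^{⊗k}]` through the increments `E[X_{s-t}^{⊗j}] - E[X_0^{⊗j}]`,
with coefficients that are moments at time `t`. Taking `t = t₀` or `s = t₀` turns the derivative
at `0` into the right and left derivatives at `t₀`, provided the coefficients are left-continuous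
at `t₀`. In the additive case they are moments of lower order, differentiable by induction on `k`;
in the multiplicative case `E[X_t^{⊗k}] = E[X_{t₀-t}^{⊗k}]⁻¹ E[X_{t₀}^{⊗k}]` for `t` near `t₀`,
because `E[X_u^{⊗k}] → 1` as `u → 0`.
-/

open Filter Set Topology

lemma tendsto_sub_const_nhdsWithin {G : Type*} [AddGroup G] [TopologicalSpace G]
    [IsTopologicalAddGroup G] {s u : Set G} (t₀ : G) (h : MapsTo (· - t₀) s u) :
    Tendsto (· - t₀) (𝓝[s] t₀) (𝓝[u] 0) := by
  simpa using ((continuous_sub_right t₀).continuousWithinAt (s := s) (x := t₀)).tendsto_nhdsWithin h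

lemma tendsto_const_sub_nhdsWithin {G : Type*} [AddGroup G] [TopologicalSpace G]
    [IsTopologicalAddGroup G] {s u : Set G} (t₀ : G) (h : MapsTo (t₀ - ·) s u) :
    Tendsto (t₀ - ·) (𝓝[s] t₀) (𝓝[u] 0) := by
  simpa using ((continuous_sub_left t₀).continuousWithinAt (s := s) (x := t₀)).tendsto_nhdsWithin h

theorem hasDerivWithinAt_Ici_of_increment {ι : Type*} (S : Finset ι) {f : ℝ → ℂ}
    {b g : ι → ℝ → ℂ} {g' : ι → ℂ} {t₀ : ℝ} (ht₀ : 0 ≤ t₀)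
    (hinc : ∀ t s, 0 ≤ t → t ≤ s → f s - f t = ∑ j ∈ S, b j t * (g j (s - t) - g j 0))
    (hg : ∀ j ∈ S, HasDerivWithinAt (g j) (g' j) (Ici 0) 0)
    (hb : ∀ j ∈ S, ContinuousWithinAt (b j) (Icc 0 t₀) t₀) :
    HasDerivWithinAt f (∑ j ∈ S, b j t₀ * g' j) (Ici 0) t₀ := by
  have hslope : ∀ j ∈ S, Tendsto (slope (g j) 0) (𝓝[>] 0) (𝓝 (g' j)) := fun j hj =>
    (hasDerivWithinAt_iff_tendsto_slope' self_notMem_Ioi).1 (hg j hj).Ioi_of_Ici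
  refine (HasDerivWithinAt.union ?_ ?_).mono (Ici_subset_Icc_union_Ici (b := t₀))
  · rw [hasDerivWithinAt_iff_tendsto_slope, Icc_sdiff_right]
    have hshift := tendsto_const_sub_nhdsWithin (s := Ico 0 t₀) (u := Ioi 0) t₀
      fun t ht => sub_pos.2 ht.2
    refine (tendsto_finsetSum S fun j hj => ((hb j hj).mono Ico_subset_Icc_self).tendsto.mul
      ((hslope j hj).comp hshift)).congr' ?_
    filter_upwards [self_mem_nhdsWithin] with t ht
    rw [slope_comm, slope_def_module, hinc t t₀ ht.1 ht.2.le]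
    simp only [Function.comp_apply, slope_def_module, sub_zero, Finset.smul_sum, mul_smul_comm]
  · rw [← hasDerivWithinAt_Ioi_iff_Ici, hasDerivWithinAt_iff_tendsto_slope' self_notMem_Ioi]
    have hshift := tendsto_sub_const_nhdsWithin (s := Ioi t₀) (u := Ioi 0) t₀
      fun t (ht : t₀ < t) => show 0 < t - t₀ from sub_pos.2 ht
    refine (tendsto_finsetSum S fun j hj => tendsto_const_nhds.mul
      ((hslope j hj).comp hshift)).congr' ?_
    filter_upwards [self_mem_nhdsWithin] with t ht
    rw [slope_def_module, hinc t₀ t ht₀ ht.le]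
    simp only [Function.comp_apply, slope_def_module, sub_zero, Finset.smul_sum, mul_smul_comm]

section

variable {N : ℕ} {Ω : Type*} [MeasurableSpace Ω] {μ : Measure Ω}
  {X : ℝ → Ω → Matrix (Fin N) (Fin N) ℂ}

def HasIntegrableTensMoments (μ : Measure Ω) (X : ℝ → Ω → Matrix (Fin N) (Fin N) ℂ) : Prop :=
  ∀ (t : ℝ) (k : ℕ) (h : Fin k → Fin N × Fin N),
    Integrable (fun ω => ∏ s, X t ω (h s).1 (h s).2) μ

lemma HasIntegrableTensMoments.integrable_prod {ι : Type*} (hX : HasIntegrableTensMoments μ X)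
    (t : ℝ) (A : Finset ι) (p : ι → Fin N × Fin N) :
    Integrable (fun ω => ∏ i ∈ A, X t ω (p i).1 (p i).2) μ := by
  refine (hX t A.card fun j => p (A.equivFin.symm j)).congr (ae_of_all _ fun ω => ?_)
  dsimp only
  rw [← A.prod_coe_sort]
  exact A.equivFin.symm.prod_comp fun i => X t ω (p i).1 (p i).2

lemma HasIntegrableTensMoments.aemeasurable (hX : HasIntegrableTensMoments μ X) (t : ℝ) :
    AEMeasurable (fun ω (rc : Fin N × Fin N) => X t ω rc.1 rc.2) μ :=
  aemeasurable_pi_lambda _ fun rc => by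
    simpa using (hX t 1 fun _ => rc).aemeasurable

def IsIncrementOf (μ : Measure Ω) (X : ℝ → Ω → Matrix (Fin N) (Fin N) ℂ) (t s : ℝ)
    (D : Ω → Fin N × Fin N → ℂ) : Prop :=
  IndepFun D (fun ω (q : {u : ℝ // 0 ≤ u ∧ u ≤ t} × Fin N × Fin N) => X q.1 ω q.2.1 q.2.2) μ ∧
    μ.map D = μ.map fun ω (rc : Fin N × Fin N) => X (s - t) ω rc.1 rc.2

namespace IsIncrementOf

variable {t s : ℝ} {D : Ω → Fin N × Fin N → ℂ} {ι κ : Type*}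

lemma indepFun_prod (hD : IsIncrementOf μ X t s D) (ht : 0 ≤ t) (A : Finset ι)
    (p : ι → Fin N × Fin N) (B : Finset κ) (q : κ → Fin N × Fin N) :
    IndepFun (fun ω => ∏ i ∈ A, D ω (p i)) (fun ω => ∏ j ∈ B, X t ω (q j).1 (q j).2) μ :=
  hD.1.comp (φ := fun v : Fin N × Fin N → ℂ => ∏ i ∈ A, v (p i))
    (ψ := fun w : {u : ℝ // 0 ≤ u ∧ u ≤ t} × Fin N × Fin N → ℂ => ∏ j ∈ B, w (⟨t, ht, le_rfl⟩, q j))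
    (Finset.measurable_prod _ fun _ _ => measurable_pi_apply _)
    (Finset.measurable_prod _ fun _ _ => measurable_pi_apply _)

lemma identDistrib_prod [IsProbabilityMeasure μ] (hD : IsIncrementOf μ X t s D)
    (hX : HasIntegrableTensMoments μ X) (A : Finset ι) (p : ι → Fin N × Fin N) :
    IdentDistrib (fun ω => ∏ i ∈ A, D ω (p i))
      (fun ω => ∏ i ∈ A, X (s - t) ω (p i).1 (p i).2) μ μ := by
  -- `Measure.map` of a map that is not a.e.-measurable is `0`, so `hD.2` forces measurability.
  have hmap : μ.map D ≠ 0 := by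
    rw [hD.2]
    exact (Measure.isProbabilityMeasure_map (hX.aemeasurable (s - t))).ne_zero
  exact (IdentDistrib.mk (.of_map_ne_zero hmap) (hX.aemeasurable (s - t)) hD.2).comp
    (u := fun v => ∏ i ∈ A, v (p i)) (Finset.measurable_prod _ fun _ _ => measurable_pi_apply _)

lemma integrable_prod_mul [IsProbabilityMeasure μ] (hD : IsIncrementOf μ X t s D) (ht : 0 ≤ t)
    (hX : HasIntegrableTensMoments μ X) (A : Finset ι) (p : ι → Fin N × Fin N) (B : Finset κ)
    (q : κ → Fin N × Fin N) :
    Integrable (fun ω => (∏ i ∈ A, D ω (p i)) * ∏ j ∈ B, X t ω (q j).1 (q j).2) μ :=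
  (hD.indepFun_prod ht A p B q).integrable_mul
    ((hD.identDistrib_prod hX A p).integrable_iff.2 (hX.integrable_prod _ A p))
    (hX.integrable_prod t B q)

lemma integral_prod_mul [IsProbabilityMeasure μ] (hD : IsIncrementOf μ X t s D) (ht : 0 ≤ t)
    (hX : HasIntegrableTensMoments μ X) (A : Finset ι) (p : ι → Fin N × Fin N) (B : Finset κ)
    (q : κ → Fin N × Fin N) :
    ∫ ω, (∏ i ∈ A, D ω (p i)) * ∏ j ∈ B, X t ω (q j).1 (q j).2 ∂μ =
      (∫ ω, ∏ i ∈ A, X (s - t) ω (p i).1 (p i).2 ∂μ) * ∫ ω, ∏ j ∈ B, X t ω (q j).1 (q j).2 ∂μ := by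
  have hA := hD.identDistrib_prod hX A p
  rw [(hD.indepFun_prod ht A p B q).integral_fun_mul_eq_mul_integral
    hA.aemeasurable_fst.aestronglyMeasurable
    (hX.integrable_prod t B q).aestronglyMeasurable, hA.integral_eq]

end IsIncrementOf

lemma Finset.prod_orderIsoOfFin {α M : Type*} [LinearOrder α] [CommMonoid M] (I : Finset α)
    (h : α → M) : ∏ j : Fin I.card, h (I.orderIsoOfFin rfl j) = ∏ i ∈ I, h i := by
  rw [← I.prod_coe_sort]
  exact (I.orderIsoOfFin rfl).toEquiv.prod_comp fun i => h i

lemma integral_prod_eq_tensMom {k : ℕ} (Y : Ω → Matrix (Fin N) (Fin N) ℂ) (I : Finset (Fin k))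
    (r c : Fin k → Fin N) :
    ∫ ω, ∏ i ∈ I, Y ω (r i) (c i) ∂μ =
      tensMom μ Y (fun j => r (I.orderIsoOfFin rfl j)) (fun j => c (I.orderIsoOfFin rfl j)) := by
  refine integral_congr_ae (ae_of_all _ fun ω => ?_)
  exact (I.prod_orderIsoOfFin fun i => Y ω (r i) (c i)).symm

lemma tensMom_of_eq_zero [IsProbabilityMeasure μ] {m : ℕ} (hm : m = 0)
    (Y : Ω → Matrix (Fin N) (Fin N) ℂ) (r c : Fin m → Fin N) : tensMom μ Y r c = 1 := by
  subst hm
  simp [tensMom]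

lemma IsAdditiveLevy.isIncrementOf (hL : IsAdditiveLevy μ X) {t s : ℝ} (ht : 0 ≤ t)
    (hts : t ≤ s) : IsIncrementOf μ X t s fun ω rc => (X s ω - X t ω) rc.1 rc.2 :=
  ⟨hL.2.2.2.1 t s ht hts, hL.2.2.2.2 t s ht hts⟩

lemma IsAdditiveLevy.tensMom_eq_sum_insEntry [IsProbabilityMeasure μ] (hL : IsAdditiveLevy μ X)
    (hX : HasIntegrableTensMoments μ X) {t s : ℝ} (ht : 0 ≤ t) (hts : t ≤ s) {k : ℕ}
    (r c : Fin k → Fin N) :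
    tensMom μ (X s) r c = ∑ I, insEntry I (tensMom μ (X t)) (tensMom μ (X (s - t))) r c := by
  set D : Ω → Fin N × Fin N → ℂ := fun ω rc => (X s ω - X t ω) rc.1 rc.2
  have hD := hL.isIncrementOf ht hts
  have hexpand : ∀ ω, ∏ i, X s ω (r i) (c i) =
      ∑ I : Finset (Fin k), (∏ i ∈ Iᶜ, D ω (r i, c i)) * ∏ i ∈ I, X t ω (r i) (c i) := by
    intro ω
    calc ∏ i, X s ω (r i) (c i) = ∏ i, (X t ω (r i) (c i) + D ω (r i, c i)) := by
          simp [D]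
      _ = _ := by
          rw [Fintype.prod_add]
          exact Finset.sum_congr rfl fun I _ => mul_comm _ _
  rw [tensMom, integral_congr_ae (ae_of_all _ hexpand), integral_finsetSum _ fun I _ =>
    hD.integrable_prod_mul ht hX Iᶜ (fun i => (r i, c i)) I (fun i => (r i, c i))]
  refine Finset.sum_congr rfl fun I _ => ?_
  rw [hD.integral_prod_mul ht hX Iᶜ (fun i => (r i, c i)) I (fun i => (r i, c i)), mul_comm]
  simp only [integral_prod_eq_tensMom]
  rfl

lemma IsAdditiveLevy.tensMom_sub_eq_sum [IsProbabilityMeasure μ] (hL : IsAdditiveLevy μ X)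
    (hX : HasIntegrableTensMoments μ X) {t s : ℝ} (ht : 0 ≤ t) (hts : t ≤ s) {k : ℕ}
    (r c : Fin k → Fin N) :
    tensMom μ (X s) r c - tensMom μ (X t) r c =
      ∑ I ∈ Finset.univ.filter fun I : Finset (Fin k) => I ≠ Finset.univ,
        insEntry I (tensMom μ (X t))
          (fun a b => tensMom μ (X (s - t)) a b - tensMom μ (X 0) a b) r c := by
  have hself := hL.tensMom_eq_sum_insEntry hX ht le_rfl r c
  rw [sub_self] at hself
  rw [hL.tensMom_eq_sum_insEntry hX ht hts r c, hself, ← Finset.sum_sub_distrib,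
    Finset.sum_filter_of_ne]
  · exact Finset.sum_congr rfl fun I _ => (mul_sub _ _ _).symm
  · rintro I - hI rfl
    apply hI
    simp only [insEntry, tensMom_of_eq_zero (Finset.card_eq_zero.2 Finset.compl_univ), sub_self,
      mul_zero]

theorem IsAdditiveLevy.hasDerivWithinAt_tensMom [IsProbabilityMeasure μ]
    (hL : IsAdditiveLevy μ X) (hX : HasIntegrableTensMoments μ X)
    {G : ∀ k : ℕ, (Fin k → Fin N) → (Fin k → Fin N) → ℂ}
    (hG : ∀ (k : ℕ) (r c : Fin k → Fin N),
      HasDerivWithinAt (fun t => tensMom μ (X t) r c) (G k r c) (Set.Ici (0 : ℝ)) 0)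
    (k : ℕ) (r c : Fin k → Fin N) {t₀ : ℝ} (ht₀ : 0 ≤ t₀) :
    HasDerivWithinAt (fun t => tensMom μ (X t) r c)
      (∑ I ∈ Finset.univ.filter fun I : Finset (Fin k) => I ≠ Finset.univ,
        insEntry I (tensMom μ (X t₀)) (G Iᶜ.card) r c) (Set.Ici 0) t₀ := by
  induction k using Nat.strong_induction_on generalizing t₀ with
  | _ k ih =>
  refine hasDerivWithinAt_Ici_of_increment
    (Finset.univ.filter fun I : Finset (Fin k) => I ≠ Finset.univ) ht₀
    (b := fun I t => tensMom μ (X t) (fun j => r (I.orderIsoOfFin rfl j))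
      (fun j => c (I.orderIsoOfFin rfl j)))
    (g := fun I u => tensMom μ (X u) (fun j => r (Iᶜ.orderIsoOfFin rfl j))
      (fun j => c (Iᶜ.orderIsoOfFin rfl j)))
    (g' := fun I => G Iᶜ.card (fun j => r (Iᶜ.orderIsoOfFin rfl j))
      (fun j => c (Iᶜ.orderIsoOfFin rfl j)))
    (fun t s ht hts => hL.tensMom_sub_eq_sum hX ht hts r c) (fun I _ => hG _ _ _) fun I hI => ?_
  have hcard : I.card < k := by
    simpa using Finset.card_lt_card
      ((Finset.subset_univ I).ssubset_of_ne (Finset.mem_filter.1 hI).2)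
  exact (ih I.card hcard _ _ ht₀).continuousWithinAt.mono Icc_subset_Ici_self

noncomputable def tensMomMatrix (μ : Measure Ω) (Y : Ω → Matrix (Fin N) (Fin N) ℂ) (k : ℕ) :
    Matrix (Fin k → Fin N) (Fin k → Fin N) ℂ :=
  Matrix.of (tensMom μ Y)

lemma tensMomMatrix_one [IsProbabilityMeasure μ] (k : ℕ) :
    tensMomMatrix μ (fun _ => (1 : Matrix (Fin N) (Fin N) ℂ)) k = 1 := by
  ext a b
  simp [tensMomMatrix, tensMom, Matrix.one_apply, Fintype.prod_boole, funext_iff]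

lemma Matrix.tendsto_of_eq_mul {α n K : Type*} [Fintype n] [DecidableEq n] [Field K]
    [TopologicalSpace K] [IsTopologicalDivisionRing K] [T1Space K] {l : Filter α}
    {A F : α → Matrix n n K} {F₀ : Matrix n n K} (hA : Tendsto A l (𝓝 1))
    (hF : ∀ᶠ x in l, F₀ = A x * F x) : Tendsto F l (𝓝 F₀) := by
  have hinv : Tendsto (fun x => (A x)⁻¹) l (𝓝 1) := by
    have hcont : ContinuousAt Inv.inv (1 : Matrix n n K) :=
      continuousAt_matrix_inv 1 (by simpa using continuousAt_inv₀ (one_ne_zero' K))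
    simpa [Function.comp_def] using hcont.tendsto.comp hA
  have hunit : ∀ᶠ x in l, IsUnit (A x).det := by
    have := ((continuous_id.matrix_det).tendsto 1).comp hA
    simp only [Matrix.det_one, Function.comp_def, id] at this
    filter_upwards [this.eventually_ne one_ne_zero] with x hx using hx.isUnit
  have hlim : Tendsto (fun x => (A x)⁻¹ * F₀) l (𝓝 F₀) := by
    simpa using hinv.mul (tendsto_const_nhds (x := F₀))
  refine hlim.congr' ?_
  filter_upwards [hF, hunit] with x hx hdet
  rw [hx, ← mul_assoc, Matrix.nonsing_inv_mul _ hdet, one_mul]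

lemma IsMultiplicativeLevy.isIncrementOf (hL : IsMultiplicativeLevy μ X) {t s : ℝ} (ht : 0 ≤ t)
    (hts : t ≤ s) : IsIncrementOf μ X t s fun ω rc => (X s ω * Ring.inverse (X t ω)) rc.1 rc.2 :=
  ⟨hL.2.2.2.2.1 t s ht hts, hL.2.2.2.2.2 t s ht hts⟩

lemma IsMultiplicativeLevy.tensMomMatrix_eq_mul [IsProbabilityMeasure μ]
    (hL : IsMultiplicativeLevy μ X) (hX : HasIntegrableTensMoments μ X) {t s : ℝ} (ht : 0 ≤ t)
    (hts : t ≤ s) (k : ℕ) :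
    tensMomMatrix μ (X s) k = tensMomMatrix μ (X (s - t)) k * tensMomMatrix μ (X t) k := by
  set D : Ω → Fin N × Fin N → ℂ := fun ω rc => (X s ω * Ring.inverse (X t ω)) rc.1 rc.2
  have hD := hL.isIncrementOf ht hts
  ext r c
  have hexpand : ∀ ω, ∏ i, X s ω (r i) (c i) =
      ∑ b : Fin k → Fin N, (∏ i, D ω (r i, b i)) * ∏ i, X t ω (b i) (c i) := by
    intro ω
    have hXs : X s ω = (X s ω * Ring.inverse (X t ω)) * X t ω := by
      rw [mul_assoc, Ring.inverse_mul_cancel _ (hL.2.1 t ω ht), mul_one]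
    calc ∏ i, X s ω (r i) (c i) = ∏ i, ∑ m, D ω (r i, m) * X t ω m (c i) := by
          simp_rw [D]
          conv_lhs => rw [hXs]
          simp only [Matrix.mul_apply]
      _ = _ := by
          rw [Fintype.prod_sum]
          exact Finset.sum_congr rfl fun b _ => Finset.prod_mul_distrib
  simp only [tensMomMatrix, Matrix.of_apply, Matrix.mul_apply, tensMom]
  rw [integral_congr_ae (ae_of_all _ hexpand), integral_finsetSum _ fun b _ =>
    hD.integrable_prod_mul ht hX _ (fun i => (r i, b i)) _ (fun i => (b i, c i))]
  exact Finset.sum_congr rfl fun b _ =>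
    hD.integral_prod_mul ht hX _ (fun i => (r i, b i)) _ (fun i => (b i, c i))

lemma IsMultiplicativeLevy.tensMomMatrix_zero [IsProbabilityMeasure μ]
    (hL : IsMultiplicativeLevy μ X) (k : ℕ) : tensMomMatrix μ (X 0) k = 1 := by
  rw [show X 0 = fun _ => 1 from funext hL.1, tensMomMatrix_one]

lemma IsMultiplicativeLevy.tensMom_sub_eq_sum [IsProbabilityMeasure μ]
    (hL : IsMultiplicativeLevy μ X) (hX : HasIntegrableTensMoments μ X) {t s : ℝ} (ht : 0 ≤ t)
    (hts : t ≤ s) {k : ℕ} (r c : Fin k → Fin N) :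
    tensMom μ (X s) r c - tensMom μ (X t) r c =
      ∑ b, tensMom μ (X t) b c * (tensMom μ (X (s - t)) r b - tensMom μ (X 0) r b) := by
  have hmat : tensMomMatrix μ (X s) k - tensMomMatrix μ (X t) k =
      (tensMomMatrix μ (X (s - t)) k - tensMomMatrix μ (X 0) k) * tensMomMatrix μ (X t) k := by
    rw [hL.tensMomMatrix_eq_mul hX ht hts, hL.tensMomMatrix_zero, sub_mul, one_mul]
  have := congrFun (congrFun hmat r) c
  simp only [Matrix.sub_apply, Matrix.mul_apply, tensMomMatrix, Matrix.of_apply] at this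
  rw [this]
  exact Finset.sum_congr rfl fun b _ => mul_comm _ _

lemma IsMultiplicativeLevy.continuousWithinAt_tensMom [IsProbabilityMeasure μ]
    (hL : IsMultiplicativeLevy μ X) (hX : HasIntegrableTensMoments μ X)
    {G : ∀ k : ℕ, (Fin k → Fin N) → (Fin k → Fin N) → ℂ}
    (hG : ∀ (k : ℕ) (r c : Fin k → Fin N),
      HasDerivWithinAt (fun t => tensMom μ (X t) r c) (G k r c) (Set.Ici (0 : ℝ)) 0)
    {k : ℕ} (r c : Fin k → Fin N) (t₀ : ℝ) :
    ContinuousWithinAt (fun t => tensMom μ (X t) r c) (Icc 0 t₀) t₀ := by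
  have hM0 : Tendsto (fun u => tensMomMatrix μ (X u) k) (𝓝[≥] 0) (𝓝 1) := by
    rw [← hL.tensMomMatrix_zero k]
    exact tendsto_pi_nhds.2 fun a => tendsto_pi_nhds.2 fun b => (hG k a b).continuousWithinAt
  have hshift := tendsto_const_sub_nhdsWithin (s := Icc 0 t₀) (u := Ici 0) t₀
    fun t ht => show 0 ≤ t₀ - t from sub_nonneg.2 ht.2
  have hM : Tendsto (fun t => tensMomMatrix μ (X t) k) (𝓝[Icc 0 t₀] t₀)
      (𝓝 (tensMomMatrix μ (X t₀) k)) :=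
    Matrix.tendsto_of_eq_mul (hM0.comp hshift) (eventually_nhdsWithin_of_forall fun t ht =>
      hL.tensMomMatrix_eq_mul hX ht.1 ht.2 k)
  exact tendsto_pi_nhds.1 (tendsto_pi_nhds.1 hM r) c

theorem IsMultiplicativeLevy.hasDerivWithinAt_tensMom [IsProbabilityMeasure μ]
    (hL : IsMultiplicativeLevy μ X) (hX : HasIntegrableTensMoments μ X)
    {G : ∀ k : ℕ, (Fin k → Fin N) → (Fin k → Fin N) → ℂ}
    (hG : ∀ (k : ℕ) (r c : Fin k → Fin N),
      HasDerivWithinAt (fun t => tensMom μ (X t) r c) (G k r c) (Set.Ici (0 : ℝ)) 0)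
    {k : ℕ} (r c : Fin k → Fin N) {t₀ : ℝ} (ht₀ : 0 ≤ t₀) :
    HasDerivWithinAt (fun t => tensMom μ (X t) r c)
      (∑ b, G k r b * tensMom μ (X t₀) b c) (Set.Ici 0) t₀ := by
  have key := hasDerivWithinAt_Ici_of_increment Finset.univ ht₀
    (b := fun b t => tensMom μ (X t) b c) (g := fun b u => tensMom μ (X u) r b)
    (g' := fun b => G k r b) (fun t s ht hts => hL.tensMom_sub_eq_sum hX ht hts r c)
    (fun b _ => hG k r b) fun b _ => hL.continuousWithinAt_tensMom hX hG b c t₀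
  simpa only [mul_comm] using key

end

theorem levy_tensor_moment_derivative_general {N : ℕ}
    {Ω : Type*} [MeasurableSpace Ω] (μ : Measure Ω) [IsProbabilityMeasure μ]
    (X : ℝ → Ω → Matrix (Fin N) (Fin N) ℂ)
    (hint : ∀ (t : ℝ) (k : ℕ) (h : Fin k → Fin N × Fin N),
      Integrable (fun ω => ∏ s, X t ω (h s).1 (h s).2) μ)
    (G : ∀ k : ℕ, (Fin k → Fin N) → (Fin k → Fin N) → ℂ)
    (hG : ∀ (k : ℕ) (r c : Fin k → Fin N),
      HasDerivWithinAt (fun t => tensMom μ (X t) r c) (G k r c) (Set.Ici (0 : ℝ)) 0) :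
    (IsAdditiveLevy μ X →
      ∀ (k : ℕ) (r c : Fin k → Fin N) (t₀ : ℝ), 0 ≤ t₀ →
        HasDerivWithinAt (fun t => tensMom μ (X t) r c)
          (∑ I ∈ Finset.univ.filter fun I : Finset (Fin k) => I ≠ Finset.univ,
            insEntry I (fun a b => tensMom μ (X t₀) a b) (G Iᶜ.card) r c)
          (Set.Ici (0 : ℝ)) t₀) ∧
    (IsMultiplicativeLevy μ X →
      ∀ (k : ℕ) (r c : Fin k → Fin N) (t₀ : ℝ), 0 ≤ t₀ →
        HasDerivWithinAt (fun t => tensMom μ (X t) r c)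
          (∑ mid : Fin k → Fin N, G k r mid * tensMom μ (X t₀) mid c)
          (Set.Ici (0 : ℝ)) t₀) :=
  ⟨fun hL k r c _ ht₀ => hL.hasDerivWithinAt_tensMom hint hG k r c ht₀,
    fun hL _ r c _ ht₀ => hL.hasDerivWithinAt_tensMom hint hG r c ht₀⟩

/-- Let `(X_t)_{t≥0}` be a matrix-valued Lévy process (additive or
multiplicative) with all entry moments finite, and suppose `t ↦ E[X_t^{⊗k}]` is
differentiable at `t = 0` with derivative `G_k` for every `k`.  Then `t ↦ E[X_t^{⊗k}]` is
differentiable at every `t₀ ≥ 0`, with derivative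
`∑_{l<k} ∑_{|I|=l} 𝓘_I(E[X_{t₀}^{⊗l}], G_{k−l})` in the additive case and
`G_k · E[X_{t₀}^{⊗k}]` in the multiplicative case. -/
theorem levy_tensor_moment_derivative {N : ℕ}
    {Ω : Type*} [MeasurableSpace Ω] (μ : Measure Ω) [IsProbabilityMeasure μ]
    (X : ℝ → Ω → Matrix (Fin N) (Fin N) ℂ)
    (hmeas : ∀ t r s, Measurable fun ω => X t ω r s)
    (hint : ∀ (t : ℝ) (k : ℕ) (h : Fin k → Fin N × Fin N),
      Integrable (fun ω => ∏ s, X t ω (h s).1 (h s).2) μ)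
    (G : ∀ k : ℕ, (Fin k → Fin N) → (Fin k → Fin N) → ℂ)
    (hG : ∀ (k : ℕ) (r c : Fin k → Fin N),
      HasDerivWithinAt (fun t => tensMom μ (X t) r c) (G k r c) (Set.Ici (0 : ℝ)) 0) :
    (IsAdditiveLevy μ X →
      ∀ (k : ℕ) (r c : Fin k → Fin N) (t₀ : ℝ), 0 ≤ t₀ →
        HasDerivWithinAt (fun t => tensMom μ (X t) r c)
          (∑ I ∈ Finset.univ.filter fun I : Finset (Fin k) => I ≠ Finset.univ,
            insEntry I (fun a b => tensMom μ (X t₀) a b) (G Iᶜ.card) r c)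
          (Set.Ici (0 : ℝ)) t₀) ∧
    (IsMultiplicativeLevy μ X →
      ∀ (k : ℕ) (r c : Fin k → Fin N) (t₀ : ℝ), 0 ≤ t₀ →
        HasDerivWithinAt (fun t => tensMom μ (X t) r c)
          (∑ mid : Fin k → Fin N, G k r mid * tensMom μ (X t₀) mid c)
          (Set.Ici (0 : ℝ)) t₀) :=
  levy_tensor_moment_derivative_general μ X hint G hG
end

section
/- A P-tracial algebra (A,(m_p)) is deterministic — i.e. m_{p₁⊗p₂}(a₁,…,a_{k₁+k₂}) = m_{p₁}(a₁,…,a_{k₁})·m_{p₂}(a_{k₁+1},…,a_{k₁+k₂}) for all k₁,k₂ ≥ 1, all p₁ ∈ P_{k₁}, p₂ ∈ P_{k₂} and all a's ∈ A — if and only if its P-cumulants satisfy κ_{p₁⊗p₂}(a₁,…,a_{k₁+k₂}) = κ_{p₁}(a₁,…,a_{k₁})·κ_{p₂}(a_{k₁+1},…,a_{k₁+k₂}) for all such data. -/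
open scoped Classical

/-- Partitions of `{1,…,k,1′,…,k′}`, modelled as setoids on `Fin k ⊕ Fin k`
(unprimed elements on the left, primed on the right). -/
abbrev PP (k : ℕ) := Setoid (Fin k ⊕ Fin k)

noncomputable instance setoidFintypeInst {α : Type*} [Fintype α] : Fintype (Setoid α) :=
  Fintype.ofInjective
    (fun s : Setoid α => (Finset.univ.filter fun p : α × α => s p.1 p.2))
    (by
      intro s t h
      have h' : ∀ x y : α, s x y ↔ t x y := by
        intro x y
        have := Finset.ext_iff.mp h (x, y)
        simpa using this
      exact Setoid.ext h')

/-- number of blocks of a partition -/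
noncomputable def nC {α : Type*} (s : Setoid α) : ℕ := Nat.card (Quotient s)

/-- the identity partition `{{i,i′}}`. -/
def idP (k : ℕ) : PP k := Setoid.ker (Sum.elim (id : Fin k → Fin k) id)

/-- twice the distance `d(p,q) = (nc p + nc q)/2 − nc (p ⊔ q)`. -/
noncomputable def d2 {k : ℕ} (p q : PP k) : ℤ := (nC p : ℤ) + nC q - 2 * nC (p ⊔ q)

/-- the geodesic order on partitions: `q ≤ p` iff `d(id,q) + d(q,p) = d(id,p)`. -/
def pLe {k : ℕ} (q p : PP k) : Prop := d2 (idP k) q + d2 q p = d2 (idP k) p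

/-- a permutation `σ` seen as the partition `{{i, σ(i)′}}`. -/
def permToP {k : ℕ} (σ : Equiv.Perm (Fin k)) : PP k :=
  Setoid.ker (Sum.elim (fun i => σ i) (fun j => j))

/-- tensor product of partitions: place `q` to the right of `p`. -/
def ptensor {k l : ℕ} (p : PP k) (q : PP l) : PP (k + l) :=
  Setoid.ker (fun x : Fin (k + l) ⊕ Fin (k + l) =>
    match x with
    | Sum.inl i =>
      (match finSumFinEquiv.symm i with
       | Sum.inl a => (Sum.inl (Quotient.mk p (Sum.inl a)) : Quotient p ⊕ Quotient q)
       | Sum.inr b => Sum.inr (Quotient.mk q (Sum.inl b)))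
    | Sum.inr i =>
      (match finSumFinEquiv.symm i with
       | Sum.inl a => Sum.inl (Quotient.mk p (Sum.inr a))
       | Sum.inr b => Sum.inr (Quotient.mk q (Sum.inr b))))

/-- transpose of a partition: exchange `i` and `i′`. -/
def ptrans {k : ℕ} (p : PP k) : PP k := Setoid.comap Sum.swap p

/-- the map exchanging `j` and `j′` for the (0-based) indices `j ≥ l`. -/
def swapAbove {k : ℕ} (l : ℕ) : Fin k ⊕ Fin k → Fin k ⊕ Fin k
  | Sum.inl i => if l ≤ (i : ℕ) then Sum.inr i else Sum.inl i
  | Sum.inr i => if l ≤ (i : ℕ) then Sum.inl i else Sum.inr i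

/-- the operation `S_l` on partitions: exchange `j` and `j′` for every column `j > l`. -/
def sOp {k : ℕ} (l : ℕ) (p : PP k) : PP k := Setoid.comap (swapAbove l) p

/-- the setoid generated by a relation `r`. -/
def genSetoid {α : Type*} (r : α → α → Prop) : Setoid α :=
  sInf {s : Setoid α | ∀ x y, r x y → s x y}

/-- the lexicographic encoding `(j, t) ↦ ∑_{j' < j} n j' + t` of `Σ j, Fin (n j)` into
`Fin (∑ j, n j)`. -/
def encodeSigma {k : ℕ} (n : Fin k → ℕ) (x : Σ j : Fin k, Fin (n j)) : Fin (∑ j, n j) :=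
  ⟨(∑ j' ∈ Finset.univ.filter fun j' => j' < x.1, n j') + (x.2 : ℕ), by
    calc (∑ j' ∈ Finset.univ.filter fun j' => j' < x.1, n j') + (x.2 : ℕ)
        < (∑ j' ∈ Finset.univ.filter fun j' => j' < x.1, n j') + n x.1 := by
          exact Nat.add_lt_add_left x.2.isLt _
      _ = ∑ j' ∈ insert x.1 (Finset.univ.filter fun j' => j' < x.1), n j' := by
          rw [Finset.sum_insert (by simp)]
          ring
      _ ≤ ∑ j', n j' := Finset.sum_le_sum_of_subset (Finset.subset_univ _)⟩

/-- `endOf n x` identifies `x` as an external endpoint of its group: the top of the `j`-th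
group if `x` is the first unprimed element, the bottom if `x` is the last primed one. -/
def endOf {k : ℕ} (n : Fin k → ℕ) :
    (Σ j : Fin k, Fin (n j)) ⊕ (Σ j : Fin k, Fin (n j)) → Option (Fin k ⊕ Fin k)
  | Sum.inl ⟨j, t⟩ => if (t : ℕ) = 0 then some (Sum.inl j) else none
  | Sum.inr ⟨j, t⟩ => if (t : ℕ) + 1 = n j then some (Sum.inr j) else none

/-- the elementary relations defining the partition `Insⁿ(p) ∘ σ` appearing in the
product-compatibility axiom: within the `j`-th group, the primed (bottom) vertex of a
factor is glued to the unprimed (top) vertex of the next factor, and the external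
endpoints of the groups are glued according to `p`. -/
def chainRel {k : ℕ} (n : Fin k → ℕ) (p : PP k) :
    ((Σ j : Fin k, Fin (n j)) ⊕ (Σ j : Fin k, Fin (n j))) →
      ((Σ j : Fin k, Fin (n j)) ⊕ (Σ j : Fin k, Fin (n j))) → Prop :=
  fun x y =>
    (∃ (j : Fin k) (t : ℕ) (h1 : t + 1 < n j),
        x = Sum.inr ⟨j, ⟨t, Nat.lt_of_succ_lt h1⟩⟩ ∧ y = Sum.inl ⟨j, ⟨t + 1, h1⟩⟩) ∨
    (∃ u v, p u v ∧ endOf n x = some u ∧ endOf n y = some v)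

/-- the partition `Insⁿ_i(p) ∘ σ ∈ P_{∑ n_j}` of the product-compatibility axiom. -/
def insPart {k : ℕ} (n : Fin k → ℕ) (p : PP k) : PP (∑ j, n j) :=
  genSetoid fun x y =>
    ∃ u v, chainRel n p u v ∧
      x = Sum.map (encodeSigma n) (encodeSigma n) u ∧
      y = Sum.map (encodeSigma n) (encodeSigma n) v

/-- relabelling of the columns of a partition by a permutation: `σ ∘ p ∘ σ⁻¹`. -/
def relabel {k : ℕ} (σ : Equiv.Perm (Fin k)) (p : PP k) : PP k :=
  Setoid.comap (Sum.map σ.symm σ.symm) p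

/-- A `P`-tracial algebra: a complex algebra `A` together with `k`-linear forms
`m_p : A^k → ℂ`, indexed by the partitions `p ∈ P_k`, which are symmetric under
simultaneous relabelling of the columns and of the arguments, and compatible with the
product of `A`. -/
structure PTracial (A : Type*) [Ring A] [Algebra ℂ A] where
  m : ∀ k : ℕ, PP k → (Fin k → A) → ℂ
  m_add : ∀ (k : ℕ) (p : PP k) (a : Fin k → A) (s : Fin k) (x y : A),
    m k p (Function.update a s (x + y)) =
      m k p (Function.update a s x) + m k p (Function.update a s y)
  m_smul : ∀ (k : ℕ) (p : PP k) (a : Fin k → A) (s : Fin k) (c : ℂ) (x : A),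
    m k p (Function.update a s (c • x)) = c * m k p (Function.update a s x)
  m_symm : ∀ (k : ℕ) (p : PP k) (σ : Equiv.Perm (Fin k)) (a : Fin k → A),
    m k p a = m k (relabel σ p) fun s => a (σ.symm s)
  m_prod : ∀ (k : ℕ) (p : PP k) (n : Fin k → ℕ), (∀ j, 0 < n j) →
    ∀ (a : ∀ j : Fin k, Fin (n j) → A) (b : Fin (∑ j, n j) → A),
      (∀ (j : Fin k) (t : Fin (n j)), b (encodeSigma n ⟨j, t⟩) = a j t) →
      m k p (fun j => (List.ofFn (a j)).prod) = m (∑ j, n j) (insPart n p) b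

/-- extraction of a partition to a subset `J` of its columns. -/
def extractP {k : ℕ} (p : PP k) (J : Finset (Fin k)) : PP J.card :=
  Setoid.comap
    (Sum.map (fun t => ((J.orderIsoOfFin rfl t : J) : Fin k))
      (fun t => ((J.orderIsoOfFin rfl t : J) : Fin k))) p

/-- columns `s` and `t` meet a common block of `p`. -/
def colRel {k : ℕ} (p : PP k) (s t : Fin k) : Prop :=
  p (Sum.inl s) (Sum.inl t) ∨ p (Sum.inl s) (Sum.inr t) ∨
    p (Sum.inr s) (Sum.inl t) ∨ p (Sum.inr s) (Sum.inr t)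

/-- `P`-freeness of two subalgebras, relative to the `P`-cumulant forms `κ`:
not-compatible mixed cumulants vanish, and cumulants factorize over tensor products. -/
def PFree {A : Type*} [Ring A] [Algebra ℂ A]
    (κ : ∀ k : ℕ, PP k → (Fin k → A) → ℂ) (A₁ A₂ : Subalgebra ℂ A) : Prop :=
  (∀ (k : ℕ) (p : PP k) (a : Fin k → A), (∀ s, a s ∈ A₁ ∨ a s ∈ A₂) →
    (∃ s s' : Fin k, a s ∈ A₁ ∧ a s' ∈ A₂ ∧ colRel p s s') → κ k p a = 0) ∧
  (∀ (k₁ k₂ : ℕ) (p₁ : PP k₁) (p₂ : PP k₂) (a : Fin k₁ → A) (b : Fin k₂ → A),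
    (∀ s, a s ∈ A₁) → (∀ s, b s ∈ A₂) →
    κ (k₁ + k₂) (ptensor p₁ p₂) (Fin.append a b) = κ k₁ p₁ a * κ k₂ p₂ b)

/-!
The relation `m_p = ∑_{q ≤ p} κ_q` is compatible with `⊗` because the geodesic interval below
`p₁ ⊗ p₂` is exactly `{q₁ ⊗ q₂ | q₁ ≤ p₁, q₂ ≤ p₂}`. On tensor products block counts add and joins
are componentwise, so `d` is additive, and with the triangle inequality the geodesic order on tensor
products is the product order. Every `q` on a geodesic from `id` to `p` lies below `id ⊔ p`
(semimodularity of the partition lattice), and `id ⊔ (p₁ ⊗ p₂)` joins no point of the left factor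
to one of the right, so such a `q` is itself a tensor product.

Given this, factorized cumulants sum to factorized moments; conversely, if moments factorize, then
`r ↦ κ_{r₁ ⊗ r₂}` and `r ↦ κ_{r₁} κ_{r₂}` solve the same triangular system on `P_{k₁} × P_{k₂}`,
hence agree.
-/

theorem eq_of_forall_sum_ite_eq {β M : Type*} [Fintype β] [AddCommGroup M] {R : β → β → Prop}
    [DecidableRel R] (hR : ∀ s, R s s) (hwf : WellFounded fun r s => R r s ∧ r ≠ s)
    {f g : β → M} (h : ∀ s, ∑ r, (if R r s then f r else 0) = ∑ r, if R r s then g r else 0) :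
    f = g := by
  funext s
  induction s using hwf.induction with
  | _ s ih =>
  have hrest : ∑ r ∈ Finset.univ.erase s, (if R r s then f r else 0) =
      ∑ r ∈ Finset.univ.erase s, if R r s then g r else 0 :=
    Finset.sum_congr rfl fun r hr =>
      if_ctx_congr Iff.rfl (fun hrs => ih r ⟨hrs, Finset.ne_of_mem_erase hr⟩) fun _ => rfl
  have hs := h s
  rw [← Finset.add_sum_erase _ _ (Finset.mem_univ s), ← Finset.add_sum_erase _ _
    (Finset.mem_univ s), hrest, if_pos (hR s), if_pos (hR s)] at hs
  exact add_right_cancel hs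

namespace Setoid

variable {α β : Type*}

theorem map_of_le_surjective {s t : Setoid α} (h : s ≤ t) :
    Function.Surjective (map_of_le h) :=
  fun x => Quotient.inductionOn x fun a => ⟨Quotient.mk s a, rfl⟩

theorem nC_anti [Finite α] {s t : Setoid α} (h : s ≤ t) : nC t ≤ nC s :=
  Nat.card_le_card_of_surjective _ (map_of_le_surjective h)

theorem eq_of_le_of_nC_le [Finite α] {s t : Setoid α} (h : s ≤ t) (hc : nC s ≤ nC t) :
    s = t := by
  have hinj := ((map_of_le_surjective h).bijective_of_nat_card_le hc).1
  exact le_antisymm h fun x y hxy => Quotient.exact (hinj (Quotient.sound hxy))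

def constOnClasses (s : Setoid α) : Submodule ℚ (α → ℚ) :=
  LinearMap.range (LinearMap.funLeft ℚ ℚ (Quotient.mk s))

theorem mem_constOnClasses {s : Setoid α} {f : α → ℚ} : f ∈ constOnClasses s ↔ s ≤ ker f :=
  ⟨by rintro ⟨g, rfl⟩ x y hxy; exact congrArg g (Quotient.sound hxy),
    fun h => ⟨Quotient.lift f h, rfl⟩⟩

theorem constOnClasses_antitone : Antitone (constOnClasses (α := α)) :=
  fun _ _ h _ hf => mem_constOnClasses.2 (h.trans (mem_constOnClasses.1 hf))

theorem constOnClasses_inf_le (s t : Setoid α) :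
    constOnClasses s ⊓ constOnClasses t ≤ constOnClasses (s ⊔ t) :=
  fun _ hf => mem_constOnClasses.2 (sup_le (mem_constOnClasses.1 hf.1) (mem_constOnClasses.1 hf.2))

theorem finrank_constOnClasses [Finite α] (s : Setoid α) :
    Module.finrank ℚ (constOnClasses s) = nC s := by
  have := Fintype.ofFinite (Quotient s)
  rw [constOnClasses, LinearMap.finrank_range_of_inj
      (LinearMap.funLeft_injective_of_surjective _ _ _ Quotient.mk_surjective),
    Module.finrank_fintype_fun_eq_card, nC, Nat.card_eq_fintype_card]

/-- Semimodularity of the partition lattice: a function is constant on the classes of `a ⊔ b` iff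
it is constant on those of `a` and of `b`, so this is the dimension formula for
`constOnClasses a ⊓ constOnClasses b`. -/
theorem nC_add_nC_le_nC_add_nC_sup [Finite α] {q a b : Setoid α} (ha : q ≤ a) (hb : q ≤ b) :
    nC a + nC b ≤ nC q + nC (a ⊔ b) := by
  simp only [← finrank_constOnClasses]
  rw [← Submodule.finrank_sup_add_finrank_inf_eq]
  exact add_le_add (Submodule.finrank_mono (sup_le (constOnClasses_antitone ha)
    (constOnClasses_antitone hb))) (Submodule.finrank_mono (constOnClasses_inf_le a b))

def comapOrderIso (e : α ≃ β) : Setoid β ≃o Setoid α where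
  toFun := comap e
  invFun := comap e.symm
  left_inv r := ext fun x y => by rw [comap_rel, comap_rel]; simp
  right_inv r := ext fun x y => by rw [comap_rel, comap_rel]; simp
  map_rel_iff' {r s} := ⟨fun h x y hxy => by
      have : s (e (e.symm x)) (e (e.symm y)) :=
        @h (e.symm x) (e.symm y) (show r (e (e.symm x)) (e (e.symm y)) by simpa using hxy)
      simpa using this,
    fun h _ _ hxy => h hxy⟩

@[simp] theorem comapOrderIso_rel (e : α ≃ β) (r : Setoid β) (x y : α) :
    comapOrderIso e r x y ↔ r (e x) (e y) :=
  Iff.rfl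

theorem nC_comapOrderIso (e : α ≃ β) (r : Setoid β) : nC (comapOrderIso e r) = nC r :=
  Nat.card_congr (Quotient.congr e fun _ _ => Iff.rfl)

protected def sum (r : Setoid α) (s : Setoid β) : Setoid (α ⊕ β) :=
  ker (Sum.map (Quotient.mk r) (Quotient.mk s))

variable {r : Setoid α} {s : Setoid β} {a a' : α} {b b' : β}

@[simp] theorem sum_inl_inl : r.sum s (.inl a) (.inl a') ↔ r a a' :=
  ker_def.trans (by simp [Quotient.eq])

@[simp] theorem sum_inr_inr : r.sum s (.inr b) (.inr b') ↔ s b b' :=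
  ker_def.trans (by simp [Quotient.eq])

@[simp] theorem not_sum_inl_inr : ¬ r.sum s (.inl a) (.inr b) :=
  ker_def.not.2 (by simp)

@[simp] theorem not_sum_inr_inl : ¬ r.sum s (.inr b) (.inl a) :=
  ker_def.not.2 (by simp)

theorem sum_le_iff {t : Setoid (α ⊕ β)} :
    r.sum s ≤ t ↔ r ≤ t.comap Sum.inl ∧ s ≤ t.comap Sum.inr := by
  refine ⟨fun h => ⟨fun x y hxy => h (sum_inl_inl.2 hxy), fun x y hxy => h (sum_inr_inr.2 hxy)⟩,
    fun ⟨hr, hs⟩ => ?_⟩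
  rintro (x | x) (y | y) h <;> simp only [sum_inl_inl, sum_inr_inr, not_sum_inl_inr,
    not_sum_inr_inl] at h
  exacts [hr h, hs h]

theorem gc_sum_comap :
    GaloisConnection (fun p : Setoid α × Setoid β => p.1.sum p.2)
      fun t => (t.comap Sum.inl, t.comap Sum.inr) :=
  fun _ _ => sum_le_iff

theorem sum_sup_sum (r r' : Setoid α) (s s' : Setoid β) :
    r.sum s ⊔ r'.sum s' = (r ⊔ r').sum (s ⊔ s') :=
  (gc_sum_comap.l_sup (a₁ := (r, s)) (a₂ := (r', s'))).symm

theorem sum_mono {r r' : Setoid α} {s s' : Setoid β} (hr : r ≤ r') (hs : s ≤ s') :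
    r.sum s ≤ r'.sum s' :=
  gc_sum_comap.monotone_l (a := (r, s)) (b := (r', s')) ⟨hr, hs⟩

theorem sum_inj {r r' : Setoid α} {s s' : Setoid β} : r.sum s = r'.sum s' ↔ r = r' ∧ s = s' := by
  refine ⟨fun h => ?_, fun ⟨hr, hs⟩ => hr ▸ hs ▸ rfl⟩
  constructor <;> ext x y
  · simpa using congrArg (fun t : Setoid (α ⊕ β) => t (.inl x) (.inl y)) h
  · simpa using congrArg (fun t : Setoid (α ⊕ β) => t (.inr x) (.inr y)) h

theorem eq_sum_comap_of_le_sum_top {t : Setoid (α ⊕ β)} (h : t ≤ (⊤ : Setoid α).sum ⊤) :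
    t = (t.comap Sum.inl).sum (t.comap Sum.inr) := by
  ext (x | x) (y | y) <;> simp only [sum_inl_inl, sum_inr_inr, not_sum_inl_inr,
    not_sum_inr_inl, comap_rel, iff_false] <;> exact fun hxy => by simpa using h hxy

theorem nC_sum [Finite α] [Finite β] (r : Setoid α) (s : Setoid β) :
    nC (r.sum s) = nC r + nC s := by
  rw [nC, Setoid.sum, Nat.card_congr (quotientKerEquivOfSurjective _
    (Quotient.mk_surjective.sumMap Quotient.mk_surjective)), Nat.card_sum]
  rfl

end Setoid

section Tensor

variable {k l : ℕ}

def tensorEquiv (k l : ℕ) : (Fin k ⊕ Fin k) ⊕ (Fin l ⊕ Fin l) ≃ Fin (k + l) ⊕ Fin (k + l) :=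
  (Equiv.sumSumSumComm _ _ _ _).trans (Equiv.sumCongr finSumFinEquiv finSumFinEquiv)

theorem comapOrderIso_ptensor (p : PP k) (q : PP l) :
    Setoid.comapOrderIso (tensorEquiv k l) (ptensor p q) = p.sum q := by
  ext ((x | x) | (x | x)) ((y | y) | (y | y)) <;>
    simp only [Setoid.comapOrderIso_rel] <;> unfold ptensor <;>
    simp [Setoid.ker_def, tensorEquiv, Quotient.eq]

theorem comapOrderIso_idP (k l : ℕ) :
    Setoid.comapOrderIso (tensorEquiv k l) (idP (k + l)) = (idP k).sum (idP l) := by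
  ext ((x | x) | (x | x)) ((y | y) | (y | y)) <;>
    simp only [Setoid.comapOrderIso_rel] <;> unfold idP <;>
    simp [Setoid.ker_def, tensorEquiv, Fin.ext_iff] <;> omega

theorem ptensor_eq (p : PP k) (q : PP l) :
    ptensor p q = (Setoid.comapOrderIso (tensorEquiv k l)).symm (p.sum q) :=
  (Setoid.comapOrderIso _).eq_symm_apply.2 (comapOrderIso_ptensor p q)

theorem idP_add (k l : ℕ) : idP (k + l) = ptensor (idP k) (idP l) := by
  rw [ptensor_eq, OrderIso.eq_symm_apply, comapOrderIso_idP]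

theorem nC_ptensor (p : PP k) (q : PP l) : nC (ptensor p q) = nC p + nC q := by
  rw [← Setoid.nC_comapOrderIso (tensorEquiv k l), comapOrderIso_ptensor, Setoid.nC_sum]

theorem ptensor_sup_ptensor (p₁ q₁ : PP k) (p₂ q₂ : PP l) :
    ptensor p₁ p₂ ⊔ ptensor q₁ q₂ = ptensor (p₁ ⊔ q₁) (p₂ ⊔ q₂) := by
  simp only [ptensor_eq, ← map_sup, Setoid.sum_sup_sum]

theorem ptensor_mono {p p' : PP k} {q q' : PP l} (hp : p ≤ p') (hq : q ≤ q') :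
    ptensor p q ≤ ptensor p' q' := by
  simpa only [ptensor_eq, OrderIso.le_iff_le] using Setoid.sum_mono hp hq

theorem ptensor_inj {p p' : PP k} {q q' : PP l} :
    ptensor p q = ptensor p' q' ↔ p = p' ∧ q = q' := by
  rw [ptensor_eq, ptensor_eq, OrderIso.apply_eq_iff_eq, Setoid.sum_inj]

theorem exists_eq_ptensor_of_le {q : PP (k + l)} (h : q ≤ ptensor ⊤ ⊤) :
    ∃ (q₁ : PP k) (q₂ : PP l), q = ptensor q₁ q₂ := by
  rw [ptensor_eq, OrderIso.le_symm_apply] at h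
  exact ⟨_, _, ((Setoid.comapOrderIso _).eq_symm_apply.2
    (Setoid.eq_sum_comap_of_le_sum_top h)).trans (ptensor_eq _ _).symm⟩

end Tensor

section Geodesic

variable {k l : ℕ}

theorem d2_nonneg (p q : PP k) : 0 ≤ d2 p q := by
  have := Setoid.nC_anti (le_sup_left : p ≤ p ⊔ q)
  have := Setoid.nC_anti (le_sup_right : q ≤ p ⊔ q)
  unfold d2
  omega

theorem eq_of_d2_eq_zero {p q : PP k} (h : d2 p q = 0) : p = q := by
  have := Setoid.nC_anti (le_sup_left : p ≤ p ⊔ q)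
  have := Setoid.nC_anti (le_sup_right : q ≤ p ⊔ q)
  unfold d2 at h
  exact (Setoid.eq_of_le_of_nC_le le_sup_left (by omega)).trans
    (Setoid.eq_of_le_of_nC_le le_sup_right (by omega)).symm

theorem d2_triangle (p q r : PP k) : d2 p r ≤ d2 p q + d2 q r := by
  have := Setoid.nC_add_nC_le_nC_add_nC_sup (le_sup_right : q ≤ p ⊔ q) (le_sup_left : q ≤ q ⊔ r)
  have := Setoid.nC_anti (sup_le_sup le_sup_left le_sup_right : p ⊔ r ≤ (p ⊔ q) ⊔ (q ⊔ r))
  unfold d2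
  omega

theorem le_sup_of_d2_add_d2_eq {x q p : PP k} (h : d2 x q + d2 q p = d2 x p) : q ≤ x ⊔ p := by
  have := Setoid.nC_add_nC_le_nC_add_nC_sup (le_sup_right : q ≤ x ⊔ q) (le_sup_left : q ≤ q ⊔ p)
  have hm : x ⊔ p = (x ⊔ q) ⊔ (q ⊔ p) :=
    Setoid.eq_of_le_of_nC_le (sup_le_sup le_sup_left le_sup_right) (by unfold d2 at h; omega)
  exact hm ▸ le_sup_right.trans le_sup_left

theorem pLe_refl (p : PP k) : pLe p p := by
  simp only [pLe, d2, sup_idem]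
  ring

theorem d2_idP_le_of_pLe {q p : PP k} (h : pLe q p) : d2 (idP k) q ≤ d2 (idP k) p := by
  have := d2_nonneg q p
  unfold pLe at h
  omega

theorem d2_idP_lt_of_pLe {q p : PP k} (h : pLe q p) (hne : q ≠ p) :
    d2 (idP k) q < d2 (idP k) p := by
  have := (d2_nonneg q p).lt_of_ne fun h0 => hne (eq_of_d2_eq_zero h0.symm)
  unfold pLe at h
  omega

theorem d2_ptensor (q₁ p₁ : PP k) (q₂ p₂ : PP l) :
    d2 (ptensor q₁ q₂) (ptensor p₁ p₂) = d2 q₁ p₁ + d2 q₂ p₂ := by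
  simp only [d2, ptensor_sup_ptensor, nC_ptensor]
  push_cast
  ring

theorem pLe_ptensor_iff {q₁ p₁ : PP k} {q₂ p₂ : PP l} :
    pLe (ptensor q₁ q₂) (ptensor p₁ p₂) ↔ pLe q₁ p₁ ∧ pLe q₂ p₂ := by
  have := d2_triangle (idP k) q₁ p₁
  have := d2_triangle (idP l) q₂ p₂
  simp only [pLe, idP_add, d2_ptensor]
  omega

theorem exists_ptensor_of_pLe_ptensor {p₁ : PP k} {p₂ : PP l} {q : PP (k + l)}
    (h : pLe q (ptensor p₁ p₂)) :
    ∃ (q₁ : PP k) (q₂ : PP l), q = ptensor q₁ q₂ ∧ pLe q₁ p₁ ∧ pLe q₂ p₂ := by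
  have hq : q ≤ ptensor ⊤ ⊤ :=
    calc q ≤ idP (k + l) ⊔ ptensor p₁ p₂ := le_sup_of_d2_add_d2_eq h
      _ = ptensor (idP k ⊔ p₁) (idP l ⊔ p₂) := by rw [idP_add, ptensor_sup_ptensor]
      _ ≤ ptensor ⊤ ⊤ := ptensor_mono le_top le_top
  obtain ⟨q₁, q₂, rfl⟩ := exists_eq_ptensor_of_le hq
  exact ⟨q₁, q₂, rfl, pLe_ptensor_iff.1 h⟩

theorem sum_pLe_ptensor {M : Type*} [AddCommMonoid M] (p₁ : PP k) (p₂ : PP l)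
    (F : PP (k + l) → M) :
    ∑ q, (if pLe q (ptensor p₁ p₂) then F q else 0) =
      ∑ r : PP k × PP l, if pLe r.1 p₁ ∧ pLe r.2 p₂ then F (ptensor r.1 r.2) else 0 := by
  refine (Fintype.sum_of_injective (fun r => ptensor r.1 r.2)
    (fun r r' h => Prod.ext_iff.2 (ptensor_inj.1 h)) _ _ (fun q hq => if_neg fun h => ?_)
    fun r => by simp only [pLe_ptensor_iff]).symm
  obtain ⟨q₁, q₂, rfl, -⟩ := exists_ptensor_of_pLe_ptensor h
  exact hq ⟨(q₁, q₂), rfl⟩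

theorem wellFounded_pLe_prod :
    WellFounded fun r s : PP k × PP l => (pLe r.1 s.1 ∧ pLe r.2 s.2) ∧ r ≠ s := by
  refine Subrelation.wf (fun {r s} ⟨⟨h₁, h₂⟩, hne⟩ => ?_)
    (measure fun r : PP k × PP l => (d2 (idP k) r.1 + d2 (idP l) r.2).toNat).wf
  have := d2_nonneg (idP k) r.1
  have := d2_nonneg (idP l) r.2
  have := d2_idP_le_of_pLe h₁
  have := d2_idP_le_of_pLe h₂
  show (_ : ℤ).toNat < (_ : ℤ).toNat
  rcases not_and_or.1 (mt Prod.ext_iff.2 hne) with hne₁ | hne₂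
  · have := d2_idP_lt_of_pLe h₁ hne₁
    omega
  · have := d2_idP_lt_of_pLe h₂ hne₂
    omega

end Geodesic

/-- A `P`-tracial algebra is deterministic (its moments factorize over
tensor products of partitions) iff its `P`-cumulants factorize over tensor products. -/
theorem deterministic_iff_cumulants_factorize {A : Type*} [Ring A] [Algebra ℂ A]
    (T : PTracial A)
    (κ : ∀ k : ℕ, PP k → (Fin k → A) → ℂ)
    (hκ : ∀ (k : ℕ) (p : PP k) (a : Fin k → A),
      T.m k p a = ∑ p' : PP k, if pLe p' p then κ k p' a else 0) :
    (∀ (k₁ k₂ : ℕ), 1 ≤ k₁ → 1 ≤ k₂ →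
      ∀ (p₁ : PP k₁) (p₂ : PP k₂) (a : Fin k₁ → A) (b : Fin k₂ → A),
        T.m (k₁ + k₂) (ptensor p₁ p₂) (Fin.append a b) = T.m k₁ p₁ a * T.m k₂ p₂ b) ↔
    (∀ (k₁ k₂ : ℕ), 1 ≤ k₁ → 1 ≤ k₂ →
      ∀ (p₁ : PP k₁) (p₂ : PP k₂) (a : Fin k₁ → A) (b : Fin k₂ → A),
        κ (k₁ + k₂) (ptensor p₁ p₂) (Fin.append a b) = κ k₁ p₁ a * κ k₂ p₂ b) := by
  have m_ptensor : ∀ {k₁ k₂} (p₁ : PP k₁) (p₂ : PP k₂) a b,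
      T.m (k₁ + k₂) (ptensor p₁ p₂) (Fin.append a b) = ∑ r : PP k₁ × PP k₂,
        if pLe r.1 p₁ ∧ pLe r.2 p₂ then κ _ (ptensor r.1 r.2) (Fin.append a b) else 0 :=
    fun p₁ p₂ a b => by rw [hκ, sum_pLe_ptensor]
  have m_mul_m : ∀ {k₁ k₂} (p₁ : PP k₁) (p₂ : PP k₂) a b,
      T.m k₁ p₁ a * T.m k₂ p₂ b = ∑ r : PP k₁ × PP k₂,
        if pLe r.1 p₁ ∧ pLe r.2 p₂ then κ k₁ r.1 a * κ k₂ r.2 b else 0 :=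
    fun p₁ p₂ a b => by
      simp only [hκ, Finset.sum_mul_sum, ite_zero_mul_ite_zero, Fintype.sum_prod_type]
  constructor
  · intro hdet k₁ k₂ h₁ h₂ p₁ p₂ a b
    have := eq_of_forall_sum_ite_eq (fun s => ⟨pLe_refl s.1, pLe_refl s.2⟩) wellFounded_pLe_prod
      (f := fun r => κ _ (ptensor r.1 r.2) (Fin.append a b))
      (g := fun r => κ k₁ r.1 a * κ k₂ r.2 b)
      fun s => by rw [← m_ptensor, ← m_mul_m, hdet k₁ k₂ h₁ h₂]
    exact congrFun this (p₁, p₂)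
  · intro hfact k₁ k₂ h₁ h₂ p₁ p₂ a b
    simp only [m_ptensor, m_mul_m, hfact k₁ k₂ h₁ h₂]
end
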